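/- arXiv:0710.3960 — 6 statements merged into one kernel-verified Lean document; each statement's English description precedes it below -/
import Mathlib

section
/- For every integer k ≥ 3 and every positive integer w, the sequence j ↦ (#{m : 1 ≤ m ≤ j, and either the k-th cascade representation of m has fewer than three terms, or its third term n_{k-2} satisfies n_{k-2} < w}) / j tends to 0 as j → ∞. -/
set_option maxHeartbeats 1000000


/-- `a i` stands for `n_{k-i}`: the sequence `(n_k, …, n_{k-s})` is admissible for `k` iff
`n_k > n_{k-1} > … > n_{k-s} ≥ k-s > 0`. -/
def Admissible (k s : ℕ) (a : ℕ → ℕ) : Prop :=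
  s < k ∧ (∀ i < s, a (i + 1) < a i) ∧ k - s ≤ a s

/-- The `k`-th cascade representation `m = Σ_{i=0}^{s} C(n_{k-i}, k-i)` with
`n_k > n_{k-1} > … > n_{k-s} ≥ k-s > 0`; `n i` stands for `n_{k-i}`. -/
def CascadeRep (m k s : ℕ) (n : ℕ → ℕ) : Prop :=
  Admissible k s n ∧ m = ∑ i ∈ Finset.range (s + 1), (n i).choose (k - i)

namespace FewSmallAux

lemma choose_sub_le (a b d : ℕ) (h : b ≤ a) : (a - d).choose (b - d) ≤ a.choose b := by
  induction d with
  | zero => simp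
  | succ d ih =>
    refine le_trans ?_ ih
    rcases Nat.eq_zero_or_pos (b - d) with h0 | h0
    · have h1 : b - (d+1) = 0 := by omega
      simp [h0, h1]
    · have hb : b - d = (b - (d+1)) + 1 := by omega
      have ha : a - d = (a - (d+1)) + 1 := by omega
      rw [ha, hb, Nat.choose_succ_succ]
      exact Nat.le_add_right _ _

lemma le_choose (m k n : ℕ) (hk : 1 ≤ k) (hn : m + k ≤ n) : m + 1 ≤ n.choose k := by
  have h1 := choose_sub_le n k (k - 1) (by omega)
  have h2 : k - (k - 1) = 1 := by omega
  rw [h2, Nat.choose_one_right] at h1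
  omega

lemma choose_le_two_pow (n k : ℕ) : n.choose k ≤ 2 ^ n := by
  rcases le_or_gt k n with h | h
  · calc n.choose k ≤ ∑ m ∈ Finset.range (n+1), n.choose m :=
        Finset.single_le_sum (f := fun m => n.choose m) (fun _ _ => Nat.zero_le _)
          (Finset.mem_range.2 (by omega))
    _ = 2 ^ n := Nat.sum_range_choose n
  · rw [Nat.choose_eq_zero_of_lt h]; exact Nat.zero_le _

lemma six_choose (t : ℕ) : 6 * (t + 3).choose 3 = (t+1) * ((t+2) * (t+3)) := by
  have h := Nat.choose_mul_factorial_mul_factorial (show 3 ≤ t + 3 by omega)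
  have h3 : (t + 3) - 3 = t := by omega
  rw [h3] at h
  have hf : (t+3).factorial = ((t+1) * ((t+2) * (t+3))) * t.factorial := by
    show ((t+2)+1).factorial = _
    rw [Nat.factorial_succ, Nat.factorial_succ, Nat.factorial_succ]
    ring
  have h6 : Nat.factorial 3 = 6 := rfl
  rw [h6, hf] at h
  have hp := Nat.factorial_pos t
  have : (t + 3).choose 3 * 6 = (t+1) * ((t+2) * (t+3)) :=
    Nat.eq_of_mul_eq_mul_right hp (by linarith [h])
  omega

lemma two_choose (t : ℕ) : 2 * (t + 2).choose 2 = (t+1) * (t+2) := by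
  have h := Nat.choose_mul_factorial_mul_factorial (show 2 ≤ t + 2 by omega)
  have h3 : (t + 2) - 2 = t := by omega
  rw [h3] at h
  have hf : (t+2).factorial = ((t+1) * (t+2)) * t.factorial := by
    rw [Nat.factorial_succ, Nat.factorial_succ]; ring
  have h2 : Nat.factorial 2 = 2 := rfl
  rw [h2, hf] at h
  have hp := Nat.factorial_pos t
  have : (t + 2).choose 2 * 2 = (t+1) * (t+2) :=
    Nat.eq_of_mul_eq_mul_right hp (by linarith [h])
  omega

/-- natural cube root (rounded down, as greatest `n` with `n ^ 3 ≤ t`). -/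
def ncbrt (t : ℕ) : ℕ := Nat.findGreatest (fun n => n ^ 3 ≤ t) t

lemma ncbrt_le (t : ℕ) : (ncbrt t) ^ 3 ≤ t := by
  rcases Nat.eq_zero_or_pos (ncbrt t) with h | h
  · simp [h]
  · exact Nat.findGreatest_spec (P := fun n => n ^ 3 ≤ t) (m := 0) (by omega) (by simp)

lemma le_ncbrt (x t : ℕ) (h : x ^ 3 ≤ t) : x ≤ ncbrt t := by
  have hx : x ≤ t := le_trans (Nat.le_self_pow (by omega) x) h
  exact Nat.le_findGreatest hx h

lemma bound_a (k a j : ℕ) (hk : 3 ≤ k) (h : a.choose k ≤ j) : a ≤ k + ncbrt (6 * j) := by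
  rcases le_or_gt a k with h1 | h1
  · omega
  · set t := a - k with ht
    have hsub := choose_sub_le a k (k - 3) (by omega)
    have h2 : a - (k - 3) = t + 3 := by omega
    have h3 : k - (k - 3) = 3 := by omega
    rw [h2, h3] at hsub
    have h4 : (t + 1) ^ 3 ≤ 6 * j := by
      have := six_choose t
      nlinarith
    have := le_ncbrt (t + 1) (6 * j) h4
    omega

lemma bound_b (k b j : ℕ) (hk : 3 ≤ k) (h : b.choose (k - 1) ≤ j) :
    b ≤ k + Nat.sqrt (2 * j) := by
  rcases le_or_gt b k with h1 | h1
  · omega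
  · set t := b - k + 1 with ht
    have hsub := choose_sub_le b (k - 1) (k - 3) (by omega)
    have h2 : b - (k - 3) = t + 2 := by omega
    have h3 : (k - 1) - (k - 3) = 2 := by omega
    rw [h2, h3] at hsub
    have h4 : (t + 1) * (t + 1) ≤ 2 * j := by
      have := two_choose t
      nlinarith
    have := Nat.le_sqrt.2 h4
    omega

/-- Every positive integer has a cascade representation whose leading term is at most `m`. -/
lemma exists_rep : ∀ k, 1 ≤ k → ∀ m, 1 ≤ m →
    ∃ s n, CascadeRep m k s n ∧ (n 0).choose k ≤ m := by
  intro k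
  induction k with
  | zero => omega
  | succ k ih =>
    intro _ m hm
    set K := k + 1 with hK
    set P : ℕ → Prop := fun n => n.choose K ≤ m with hP
    have hPk : P K := by simp [hP, Nat.choose_self]; omega
    set n0 := Nat.findGreatest P (m + K) with hn0
    have hKn0 : K ≤ n0 := Nat.le_findGreatest (by omega) hPk
    have h0 : (n0).choose K ≤ m := Nat.findGreatest_spec (P := P) (by omega) hPk
    have hmax : m < (n0 + 1).choose K := by
      rcases le_or_gt (n0 + 1) (m + K) with h | h
      · have := Nat.findGreatest_is_greatest (P := P) (n := m + K) (k := n0 + 1) (by omega) h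
        simpa [hP, not_le] using this
      · have := le_choose m K (n0 + 1) (by omega) (by omega)
        omega
    have hpascal : (n0 + 1).choose K = n0.choose k + n0.choose K := Nat.choose_succ_succ n0 k
    set m' := m - n0.choose K with hm'
    have hlt : m' < n0.choose k := by omega
    rcases Nat.eq_zero_or_pos m' with hz | hpos
    · refine ⟨0, fun _ => n0, ⟨⟨by omega, by omega, by simpa using hKn0⟩, ?_⟩, by simpa using h0⟩
      simp
      omega
    · rcases k with _ | k'
      · simp [Nat.choose_zero_right] at hlt
        omega
      · obtain ⟨s', n', ⟨⟨hs', hdec, hlast⟩, hsum⟩, htop⟩ := ih (by omega) m' hpos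
        have hn'0 : n' 0 < n0 := by
          by_contra hcon
          push_neg at hcon
          have := Nat.choose_le_choose (k' + 1) hcon
          omega
        refine ⟨s' + 1, fun i => match i with | 0 => n0 | (j+1) => n' j,
          ⟨⟨by omega, ?_, ?_⟩, ?_⟩, h0⟩
        · intro i hi
          match i with
          | 0 => exact hn'0
          | (j+1) => exact hdec j (by omega)
        · show K - (s' + 1) ≤ n' s'
          have : K - (s' + 1) = (k' + 1) - s' := by omega
          omega
        · rw [Finset.sum_range_succ']
          have : ∀ i, (K - (i + 1)) = (k' + 1) - i := by omega
          simp only [this]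
          simp only [Nat.sub_zero]
          omega

lemma card_bound (k w j : ℕ) (hk : 3 ≤ k) (hw : 0 < w) :
    Set.ncard {m : ℕ | 1 ≤ m ∧ m ≤ j ∧
        ∀ (s : ℕ) (n : ℕ → ℕ), CascadeRep m k s n → s < 2 ∨ n 2 < w}
      ≤ (k * 2 ^ w + 1) * ((k + ncbrt (6 * j) + 1) * (k + Nat.sqrt (2 * j) + 1)) := by
  set A := k + ncbrt (6 * j) + 1 with hA
  set B := k + Nat.sqrt (2 * j) + 1 with hB
  set C := k * 2 ^ w + 1 with hC
  set φ : ℕ × ℕ × ℕ → ℕ := fun p => p.2.1.choose k + p.2.2.choose (k - 1) + p.1 with hφ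
  set T : Finset (ℕ × ℕ × ℕ) := (Finset.range C) ×ˢ (Finset.range A) ×ˢ (Finset.range B)
    with hT
  have hsub : {m : ℕ | 1 ≤ m ∧ m ≤ j ∧
      ∀ (s : ℕ) (n : ℕ → ℕ), CascadeRep m k s n → s < 2 ∨ n 2 < w} ⊆ ↑(T.image φ) := by
    rintro m ⟨hm1, hmj, H⟩
    obtain ⟨s, n, hrep, -⟩ := exists_rep k (by omega) m hm1
    obtain ⟨⟨hsk, hdec, hlast⟩, hsum⟩ := hrep
    simp only [Finset.coe_image, Set.mem_image, Finset.mem_coe, hT, Finset.mem_product,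
      Finset.mem_range]
    rcases s with _ | s
    · -- one term
      have hsum0 : m = (n 0).choose k := by simpa using hsum
      have ha := bound_a k (n 0) j hk (by omega)
      refine ⟨(0, n 0, 0), ⟨?_, ?_, ?_⟩, ?_⟩
      · show 0 < C
        omega
      · show n 0 < A
        omega
      · show 0 < B
        omega
      · show (n 0).choose k + Nat.choose 0 (k - 1) + 0 = m
        rw [Nat.choose_eq_zero_of_lt (show 0 < k - 1 by omega)]
        omega
    · rcases s with _ | t
      · -- two terms
        have hsum1 : m = (n 0).choose k + (n 1).choose (k - 1) := by
          rw [Finset.sum_range_succ, Finset.sum_range_one] at hsum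
          simpa using hsum
        have ha := bound_a k (n 0) j hk (by omega)
        have hb := bound_b k (n 1) j hk (by omega)
        refine ⟨(0, n 0, n 1), ⟨?_, ?_, ?_⟩, ?_⟩
        · show 0 < C
          omega
        · show n 0 < A
          omega
        · show n 1 < B
          omega
        · show (n 0).choose k + (n 1).choose (k - 1) + 0 = m
          omega
      · -- at least three terms: third term must be < w
        have hw2 : n 2 < w := by
          rcases H (t + 2) n ⟨⟨hsk, hdec, hlast⟩, hsum⟩ with h | h
          · omega
          · exact h
        set f : ℕ → ℕ := fun i => (n i).choose (k - i) with hf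
        have hsplit : m = (∑ i ∈ Finset.range (t + 1), f (i + 2)) + f 1 + f 0 := by
          rw [hsum, Finset.sum_range_succ' f (t + 2), Finset.sum_range_succ'
            (fun i => f (i + 1)) (t + 1)]
        set r := ∑ i ∈ Finset.range (t + 1), f (i + 2) with hr
        have hmono : ∀ d i, i + d ≤ t + 2 → n (i + d) ≤ n i := by
          intro d
          induction d with
          | zero => intro i _; simp
          | succ d ihd =>
            intro i hi
            have h1 := hdec (i + d) (by omega)
            have h2 := ihd i (by omega)
            calc n (i + (d + 1)) = n ((i + d) + 1) := by ring_nf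
            _ ≤ n (i + d) := le_of_lt h1
            _ ≤ n i := h2
        have hrlt : r < C := by
          have hterm : ∀ i ∈ Finset.range (t + 1), f (i + 2) ≤ 2 ^ w := by
            intro i hi
            simp only [Finset.mem_range] at hi
            have h1 : n (i + 2) ≤ n 2 := by
              have := hmono i 2 (by omega)
              simpa [Nat.add_comm] using this
            calc f (i + 2) ≤ 2 ^ (n (i + 2)) := choose_le_two_pow _ _
            _ ≤ 2 ^ w := Nat.pow_le_pow_right (by omega) (by omega)
          have := Finset.sum_le_sum hterm
          rw [Finset.sum_const, Finset.card_range, smul_eq_mul] at this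
          have ht1 : t + 1 ≤ k := by omega
          calc r ≤ (t + 1) * 2 ^ w := this
          _ ≤ k * 2 ^ w := Nat.mul_le_mul_right _ ht1
          _ < C := by omega
        have h0 : f 0 = (n 0).choose k := by simp [hf]
        have h1 : f 1 = (n 1).choose (k - 1) := by simp [hf]
        have hf0 : (n 0).choose k ≤ j := by omega
        have hf1 : (n 1).choose (k - 1) ≤ j := by omega
        have ha := bound_a k (n 0) j hk hf0
        have hb := bound_b k (n 1) j hk hf1
        refine ⟨(r, n 0, n 1), ⟨?_, ?_, ?_⟩, ?_⟩
        · show r < C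
          exact hrlt
        · show n 0 < A
          omega
        · show n 1 < B
          omega
        · show (n 0).choose k + (n 1).choose (k - 1) + r = m
          omega
  calc Set.ncard {m : ℕ | 1 ≤ m ∧ m ≤ j ∧
      ∀ (s : ℕ) (n : ℕ → ℕ), CascadeRep m k s n → s < 2 ∨ n 2 < w}
      ≤ Set.ncard (↑(T.image φ) : Set ℕ) :=
        Set.ncard_le_ncard hsub (T.image φ).finite_toSet
    _ = (T.image φ).card := Set.ncard_coe_finset _
    _ ≤ T.card := Finset.card_image_le
    _ = C * (A * B) := by simp [hT]

lemma pow6_add (p q : ℕ) : (p + q) ^ 6 ≤ 64 * (p ^ 6 + q ^ 6) := by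
  rcases le_total p q with h | h
  · calc (p + q) ^ 6 ≤ (2 * q) ^ 6 := Nat.pow_le_pow_left (by omega) 6
    _ = 64 * q ^ 6 := by ring
    _ ≤ 64 * (p ^ 6 + q ^ 6) := by omega
  · calc (p + q) ^ 6 ≤ (2 * p) ^ 6 := Nat.pow_le_pow_left (by omega) 6
    _ = 64 * p ^ 6 := by ring
    _ ≤ 64 * (p ^ 6 + q ^ 6) := by omega

end FewSmallAux

open FewSmallAux in
/-- Lemma: for every `k ≥ 3` and positive `w`, the proportion of `m ≤ j` whose `k`-th cascade
representation has fewer than three terms or third term `n_{k-2} < w` tends to `0`. -/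
theorem few_small_third_term (k : ℕ) (hk : 3 ≤ k) (w : ℕ) (hw : 0 < w) :
    Filter.Tendsto
      (fun j : ℕ =>
        ((Set.ncard {m : ℕ | 1 ≤ m ∧ m ≤ j ∧
          ∀ (s : ℕ) (n : ℕ → ℕ), CascadeRep m k s n → s < 2 ∨ n 2 < w} : ℚ) / (j : ℚ)))
      Filter.atTop (nhds 0) := by
  set c : ℕ → ℕ := fun j => Set.ncard {m : ℕ | 1 ≤ m ∧ m ≤ j ∧
    ∀ (s : ℕ) (n : ℕ → ℕ), CascadeRep m k s n → s < 2 ∨ n 2 < w} with hc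
  obtain ⟨C, hC⟩ : ∃ C' : ℕ, C' = k * 2 ^ w + 1 := ⟨_, rfl⟩
  obtain ⟨D1, hD1⟩ : ∃ D : ℕ, D = 64 * ((k + 1) ^ 6 + 36) := ⟨_, rfl⟩
  obtain ⟨D2, hD2⟩ : ∃ D : ℕ, D = 64 * ((k + 1) ^ 6 + 8) := ⟨_, rfl⟩
  obtain ⟨K, hKdef⟩ : ∃ K' : ℕ, K' = C ^ 6 * (D1 * D2) := ⟨_, rfl⟩
  have key : ∀ j : ℕ, 1 ≤ j → (c j) ^ 6 ≤ K * j ^ 5 := by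
    intro j hj
    obtain ⟨x, hxd⟩ : ∃ x' : ℕ, x' = ncbrt (6 * j) := ⟨_, rfl⟩
    obtain ⟨y, hyd⟩ : ∃ y' : ℕ, y' = Nat.sqrt (2 * j) := ⟨_, rfl⟩
    have hx3 : x ^ 3 ≤ 6 * j := hxd ▸ ncbrt_le _
    have hy2 : y ^ 2 ≤ 2 * j := hyd ▸ Nat.sqrt_le' _
    have hcb : c j ≤ C * ((k + x + 1) * (k + y + 1)) := by
      rw [hC, hxd, hyd]
      exact card_bound k w j hk hw
    have hA6 : (k + x + 1) ^ 6 ≤ D1 * j ^ 2 := by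
      have h1 : (k + x + 1) ^ 6 = ((k + 1) + x) ^ 6 := by ring_nf
      have h2 := pow6_add (k + 1) x
      have h3 : x ^ 6 ≤ 36 * j ^ 2 := by
        have := Nat.pow_le_pow_left hx3 2
        calc x ^ 6 = (x ^ 3) ^ 2 := by ring
        _ ≤ (6 * j) ^ 2 := this
        _ = 36 * j ^ 2 := by ring
      have h4 : (k + 1) ^ 6 ≤ (k + 1) ^ 6 * j ^ 2 :=
        Nat.le_mul_of_pos_right _ (Nat.one_le_pow _ _ (by omega))
      calc (k + x + 1) ^ 6 = ((k + 1) + x) ^ 6 := h1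
      _ ≤ 64 * ((k + 1) ^ 6 + x ^ 6) := h2
      _ ≤ 64 * ((k + 1) ^ 6 * j ^ 2 + 36 * j ^ 2) := by omega
      _ = (64 * ((k + 1) ^ 6 + 36)) * j ^ 2 := by ring
      _ = D1 * j ^ 2 := by rw [hD1]
    have hB6 : (k + y + 1) ^ 6 ≤ D2 * j ^ 3 := by
      have h1 : (k + y + 1) ^ 6 = ((k + 1) + y) ^ 6 := by ring_nf
      have h2 := pow6_add (k + 1) y
      have h3 : y ^ 6 ≤ 8 * j ^ 3 := by
        have := Nat.pow_le_pow_left hy2 3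
        calc y ^ 6 = (y ^ 2) ^ 3 := by ring
        _ ≤ (2 * j) ^ 3 := this
        _ = 8 * j ^ 3 := by ring
      have h4 : (k + 1) ^ 6 ≤ (k + 1) ^ 6 * j ^ 3 :=
        Nat.le_mul_of_pos_right _ (Nat.one_le_pow _ _ (by omega))
      calc (k + y + 1) ^ 6 = ((k + 1) + y) ^ 6 := h1
      _ ≤ 64 * ((k + 1) ^ 6 + y ^ 6) := h2
      _ ≤ 64 * ((k + 1) ^ 6 * j ^ 3 + 8 * j ^ 3) := by omega
      _ = (64 * ((k + 1) ^ 6 + 8)) * j ^ 3 := by ring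
      _ = D2 * j ^ 3 := by rw [hD2]
    calc (c j) ^ 6 ≤ (C * ((k + x + 1) * (k + y + 1))) ^ 6 := Nat.pow_le_pow_left hcb 6
    _ = C ^ 6 * ((k + x + 1) ^ 6 * (k + y + 1) ^ 6) := by rw [mul_pow, mul_pow]
    _ ≤ C ^ 6 * ((D1 * j ^ 2) * (D2 * j ^ 3)) :=
        Nat.mul_le_mul_left _ (Nat.mul_le_mul hA6 hB6)
    _ = (C ^ 6 * (D1 * D2)) * j ^ 5 := by ring
    _ = K * j ^ 5 := by rw [hKdef]
  refine tendsto_order.2 ⟨?_, ?_⟩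
  · intro a ha
    filter_upwards with j
    have h0 : (0 : ℚ) ≤ (c j : ℚ) / (j : ℚ) := by positivity
    exact lt_of_lt_of_le ha h0
  · intro ε hε
    obtain ⟨N, hN⟩ := exists_nat_gt ((K : ℚ) / ε ^ 6)
    filter_upwards [Filter.eventually_ge_atTop (max (N + 1) 1)] with j hj
    have hj1 : 1 ≤ j := le_trans (le_max_right _ _) hj
    have hjN : (N : ℚ) < (j : ℚ) := by
      have : N + 1 ≤ j := le_trans (le_max_left _ _) hj
      exact_mod_cast by omega
    have hjq : (0 : ℚ) < (j : ℚ) := by exact_mod_cast hj1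
    have hε6 : (0 : ℚ) < ε ^ 6 := by positivity
    have hKj : (K : ℚ) < ε ^ 6 * (j : ℚ) := by
      have h1 : (K : ℚ) / ε ^ 6 < (j : ℚ) := lt_trans hN hjN
      calc (K : ℚ) = (K : ℚ) / ε ^ 6 * ε ^ 6 := by field_simp
      _ < (j : ℚ) * ε ^ 6 := by exact mul_lt_mul_of_pos_right h1 hε6
      _ = ε ^ 6 * (j : ℚ) := by ring
    have hnat : ((c j : ℚ)) ^ 6 ≤ (K : ℚ) * (j : ℚ) ^ 5 := by
      exact_mod_cast key j hj1
    rw [div_lt_iff₀ hjq]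
    by_contra hcon
    push_neg at hcon
    have hεj : (0 : ℚ) ≤ ε * (j : ℚ) := by positivity
    have h6 : (ε * (j : ℚ)) ^ 6 ≤ ((c j : ℚ)) ^ 6 := pow_le_pow_left₀ hεj hcon 6
    have hj5 : (0 : ℚ) < (j : ℚ) ^ 5 := by positivity
    have hK5 : (K : ℚ) * (j : ℚ) ^ 5 < ε ^ 6 * (j : ℚ) * (j : ℚ) ^ 5 :=
      mul_lt_mul_of_pos_right hKj hj5
    have heq : (ε * (j : ℚ)) ^ 6 = ε ^ 6 * (j : ℚ) * (j : ℚ) ^ 5 := by ring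
    linarith
end

section
/- Given a positive integer m and an integer k ≥ 2, there are unique integers s ≥ 0, n_k > n_{k-1} ≥ k-2, and a_{k-1} > a_{k-2} > … > a_{k-s} ≥ k-s > 0 such that C(n_{k-1}, k-2) > Σ_{i=1}^{s} C(a_{k-i}, k-i) and m = C(n_k, k) + C(n_{k-1}, k-1) + Σ_{i=1}^{s} C(a_{k-i}, k-i). -/
/-- `C(n, L) ≥ n + 1 - L` for `L ≥ 1`. -/
lemma lgbd_choose_ge (L : ℕ) (hL : 1 ≤ L) : ∀ n, n + 1 - L ≤ n.choose L := by
  intro n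
  induction n with
  | zero => simp [Nat.choose_eq_zero_of_lt hL]; omega
  | succ n ih =>
    rcases Nat.lt_or_ge (n+1) L with h | h
    · rw [Nat.choose_eq_zero_of_lt h]; omega
    · obtain ⟨j, rfl⟩ : ∃ j, L = j + 1 := ⟨L - 1, by omega⟩
      rw [Nat.choose_succ_succ]
      have h1 : j ≤ n := by omega
      have h2 := Nat.choose_pos h1
      simp only [Nat.succ_eq_add_one] at *
      omega

/-- Greedy choice: for `R ≥ 1`, `L ≥ 1`, there is `n ≥ L` with `C(n,L) ≤ R < C(n+1,L)`. -/
lemma lgbd_greedy (L R : ℕ) (hL : 1 ≤ L) (hR : 1 ≤ R) :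
    ∃ n, L ≤ n ∧ n.choose L ≤ R ∧ R < (n+1).choose L := by
  have hPL : L.choose L ≤ R := by rw [Nat.choose_self]; omega
  set n := Nat.findGreatest (fun n => n.choose L ≤ R) (R + L - 1) with hn
  have hspec : n.choose L ≤ R :=
    Nat.findGreatest_spec (P := fun n => n.choose L ≤ R) (by omega) hPL
  have hle : L ≤ n :=
    Nat.le_findGreatest (P := fun n => n.choose L ≤ R) (by omega) hPL
  refine ⟨n, hle, hspec, ?_⟩
  rcases Nat.lt_or_ge n (R + L - 1) with h | h
  · have := Nat.findGreatest_is_greatest (P := fun n => n.choose L ≤ R)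
      (n := R + L - 1) (k := n + 1) (by omega) (by omega)
    simp only [not_le] at this
    omega
  · have hge : R + L ≤ n + 1 := by omega
    have h2 : (R + L).choose L ≤ (n + 1).choose L := Nat.choose_le_choose L hge
    have h3 := lgbd_choose_ge L hL (R + L)
    omega

/-- Squeeze uniqueness. -/
lemma lgbd_squeeze {L R a b : ℕ} (h1 : a.choose L ≤ R) (h2 : R < (a+1).choose L)
    (h3 : b.choose L ≤ R) (h4 : R < (b+1).choose L) : a = b := by
  by_contra h
  rcases Nat.lt_or_ge a b with hab | hab
  · have : (a+1).choose L ≤ b.choose L := Nat.choose_le_choose L (by omega)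
    omega
  · have : (b+1).choose L ≤ a.choose L := Nat.choose_le_choose L (by omega)
    omega

/-- Propagation of the lower bound from the last element. -/
lemma lgbd_cascade_lb {s L : ℕ} {a : ℕ → ℕ} (hdec : ∀ i, i + 1 < s → a (i + 1) < a i)
    (hs : s ≤ L + 1) (hlast : L + 1 - s ≤ a (s - 1)) :
    ∀ i < s, L - i ≤ a i := by
  have key : ∀ d i, i + d < s → a (i + d) + d ≤ a i := by
    intro d
    induction d with
    | zero => intro i _; simp
    | succ n ih =>
      intro i hi
      have h1 := ih (i + 1) (by omega)
      have h2 := hdec i (by omega)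
      have heq : i + 1 + n = i + (n + 1) := by omega
      rw [heq] at h1
      omega
  intro i hi
  have := key (s - 1 - i) i (by omega)
  have heq : i + (s - 1 - i) = s - 1 := by omega
  rw [heq] at this
  omega

/-- Upper bound on a cascade sum. -/
lemma lgbd_cascade_ub (s : ℕ) : ∀ (L : ℕ) (a : ℕ → ℕ), 0 < s → s ≤ L →
    (∀ i, i + 1 < s → a (i + 1) < a i) → (∀ i < s, L - i ≤ a i) →
    (∑ i ∈ Finset.range s, (a i).choose (L - i)) < (a 0 + 1).choose L := by
  induction s with
  | zero => intro L a h; omega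
  | succ n ih =>
    intro L a _ hsL hdec hlb
    obtain ⟨M, rfl⟩ : ∃ M, L = M + 1 := ⟨L - 1, by omega⟩
    rcases Nat.eq_zero_or_pos n with rfl | hn
    · rw [Finset.sum_range_one]
      rw [Nat.choose_succ_succ (a 0) M]
      have hb : M ≤ a 0 := by have := hlb 0 (by omega); omega
      have hpos : 0 < (a 0).choose M := Nat.choose_pos hb
      simp only [Nat.sub_zero, Nat.succ_eq_add_one]
      omega
    · rw [Finset.sum_range_succ']
      have htail : (∑ i ∈ Finset.range n, (a (i + 1)).choose (M - i)) < (a 1 + 1).choose M := by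
        refine ih M (fun i => a (i + 1)) hn (by omega) ?_ ?_
        · intro i hi; exact hdec (i + 1) (by omega)
        · intro i hi
          show M - i ≤ a (i + 1)
          have := hlb (i + 1) (by omega); omega
      have hconv : ∀ i ∈ Finset.range n,
          (a (i + 1)).choose (M + 1 - (i + 1)) = (a (i + 1)).choose (M - i) := by
        intro i _; congr 1; omega
      rw [Finset.sum_congr rfl hconv]
      have h1 : (a 1 + 1).choose M ≤ (a 0).choose M :=
        Nat.choose_le_choose M (hdec 0 (by omega))
      rw [Nat.choose_succ_succ (a 0) M]
      simp only [Nat.sub_zero, Nat.succ_eq_add_one]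
      omega

/-- Existence of greedy cascade representation. -/
lemma lgbd_cascade_exists (L : ℕ) (hL : 1 ≤ L) : ∀ (R : ℕ),
    ∃ (s : ℕ) (a : ℕ → ℕ), s ≤ L ∧ (∀ i, i + 1 < s → a (i + 1) < a i) ∧ (∀ i < s, L - i ≤ a i) ∧
      (0 < s → (a 0).choose L ≤ R) ∧ R = ∑ i ∈ Finset.range s, (a i).choose (L - i) := by
  induction L, hL using Nat.le_induction with
  | base =>
    intro R
    rcases Nat.eq_zero_or_pos R with rfl | hR
    · exact ⟨0, fun _ => 0, by omega, by omega, by omega, by omega, by simp⟩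
    · refine ⟨1, fun _ => R, le_refl 1, by intro i hi; omega, ?_, ?_, ?_⟩
      · intro i _; show 1 - i ≤ R; omega
      · intro _; show R.choose 1 ≤ R; simp [Nat.choose_one_right]
      · simp [Nat.choose_one_right]
  | succ M hM ih =>
    intro R
    rcases Nat.eq_zero_or_pos R with rfl | hR
    · exact ⟨0, fun _ => 0, by omega, by omega, by omega, by omega, by simp⟩
    · obtain ⟨n, hn1, hn2, hn3⟩ := lgbd_greedy (M + 1) R (by omega) hR
      have hsucc : (n + 1).choose (M + 1) = n.choose M + n.choose (M + 1) :=
        Nat.choose_succ_succ n M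
      obtain ⟨s', a', hs'L, hdec', hlb', hfst', hsum'⟩ := ih (R - n.choose (M + 1))
      refine ⟨s' + 1, fun i => match i with | 0 => n | (i' + 1) => a' i', by omega, ?_, ?_, ?_, ?_⟩
      · intro i hi
        match i with
        | 0 =>
          show a' 0 < n
          have hs'pos : 0 < s' := by omega
          have := hfst' hs'pos
          by_contra hcon
          have : n.choose M ≤ (a' 0).choose M := Nat.choose_le_choose M (by omega)
          omega
        | (i' + 1) => exact hdec' i' (by omega)
      · intro i hi
        match i with
        | 0 => simpa using hn1
        | (i' + 1) =>
          have := hlb' i' (by omega)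
          have heq : M + 1 - (i' + 1) = M - i' := by omega
          simpa [heq] using this
      · intro _; simpa using hn2
      · rw [Finset.sum_range_succ']
        simp only [Nat.sub_zero]
        have hconv : ∀ i ∈ Finset.range s',
            ((fun i => match i with | 0 => n | (i' + 1) => a' i') (i + 1)).choose (M + 1 - (i + 1))
              = (a' i).choose (M - i) := by
          intro i _
          have heq : M + 1 - (i + 1) = M - i := by omega
          simp [heq]
        rw [Finset.sum_congr rfl hconv, ← hsum']
        omega

/-- Uniqueness of cascade representation. -/
lemma lgbd_cascade_unique (L : ℕ) : ∀ (s : ℕ) (a : ℕ → ℕ) (s' : ℕ) (a' : ℕ → ℕ),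
    s ≤ L → s' ≤ L →
    (∀ i, i + 1 < s → a (i + 1) < a i) → (∀ i < s, L - i ≤ a i) →
    (∀ i, i + 1 < s' → a' (i + 1) < a' i) → (∀ i < s', L - i ≤ a' i) →
    (∑ i ∈ Finset.range s, (a i).choose (L - i)) = (∑ i ∈ Finset.range s', (a' i).choose (L - i)) →
    s = s' ∧ ∀ i < s, a i = a' i := by
  induction L with
  | zero =>
    intro s a s' a' hs hs' _ _ _ _ _
    constructor
    · omega
    · intro i hi; omega
  | succ M ih =>
    intro s a s' a' hs hs' hdec hlb hdec' hlb' hsum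
    rcases Nat.eq_zero_or_pos s with rfl | hspos
    · rcases Nat.eq_zero_or_pos s' with rfl | hs'pos
      · exact ⟨rfl, fun i hi => by omega⟩
      · exfalso
        have hterm : 0 < (a' 0).choose (M + 1 - 0) :=
          Nat.choose_pos (by have := hlb' 0 hs'pos; omega)
        have hle : (a' 0).choose (M + 1 - 0) ≤ ∑ i ∈ Finset.range s', (a' i).choose (M + 1 - i) :=
          Finset.single_le_sum (f := fun i => (a' i).choose (M + 1 - i)) (fun i _ => Nat.zero_le _) (Finset.mem_range.2 hs'pos)
        simp only [Finset.range_zero, Finset.sum_empty] at hsum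
        omega
    · rcases Nat.eq_zero_or_pos s' with rfl | hs'pos
      · exfalso
        have hterm : 0 < (a 0).choose (M + 1 - 0) :=
          Nat.choose_pos (by have := hlb 0 hspos; omega)
        have hle : (a 0).choose (M + 1 - 0) ≤ ∑ i ∈ Finset.range s, (a i).choose (M + 1 - i) :=
          Finset.single_le_sum (f := fun i => (a i).choose (M + 1 - i)) (fun i _ => Nat.zero_le _) (Finset.mem_range.2 hspos)
        simp only [Finset.range_zero, Finset.sum_empty] at hsum
        omega
      · -- both positive
        have hub := lgbd_cascade_ub s (M + 1) a hspos hs hdec hlb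
        have hub' := lgbd_cascade_ub s' (M + 1) a' hs'pos hs' hdec' hlb'
        have hfst : (a 0).choose (M + 1 - 0) ≤ ∑ i ∈ Finset.range s, (a i).choose (M + 1 - i) :=
          Finset.single_le_sum (f := fun i => (a i).choose (M + 1 - i)) (fun i _ => Nat.zero_le _) (Finset.mem_range.2 hspos)
        have hfst' : (a' 0).choose (M + 1 - 0) ≤ ∑ i ∈ Finset.range s', (a' i).choose (M + 1 - i) :=
          Finset.single_le_sum (f := fun i => (a' i).choose (M + 1 - i)) (fun i _ => Nat.zero_le _) (Finset.mem_range.2 hs'pos)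
        simp only [Nat.sub_zero] at hfst hfst'
        have ha0 : a 0 = a' 0 :=
          lgbd_squeeze (L := M + 1) (R := ∑ i ∈ Finset.range s, (a i).choose (M + 1 - i))
            hfst hub (by omega) (by omega)
        obtain ⟨p, rfl⟩ : ∃ p, s = p + 1 := ⟨s - 1, by omega⟩
        obtain ⟨q, rfl⟩ : ∃ q, s' = q + 1 := ⟨s' - 1, by omega⟩
        rw [Finset.sum_range_succ', Finset.sum_range_succ'] at hsum
        have hconv : ∀ (b : ℕ → ℕ) (r : ℕ), ∀ i ∈ Finset.range r,
            (b (i + 1)).choose (M + 1 - (i + 1)) = (b (i + 1)).choose (M - i) := by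
          intro b r i _; congr 1; omega
        rw [Finset.sum_congr rfl (hconv a p), Finset.sum_congr rfl (hconv a' q)] at hsum
        simp only [Nat.sub_zero, ha0] at hsum
        have htails : (∑ i ∈ Finset.range p, (a (i + 1)).choose (M - i))
            = ∑ i ∈ Finset.range q, (a' (i + 1)).choose (M - i) := by omega
        have hrec := ih p (fun i => a (i + 1)) q (fun i => a' (i + 1))
          (by omega) (by omega)
          (fun i hi => hdec (i + 1) (by omega))
          (fun i hi => by show M - i ≤ a (i + 1); have := hlb (i + 1) (by omega); omega)
          (fun i hi => hdec' (i + 1) (by omega))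
          (fun i hi => by show M - i ≤ a' (i + 1); have := hlb' (i + 1) (by omega); omega)
          htails
        refine ⟨by omega, ?_⟩
        intro i hi
        match i with
        | 0 => exact ha0
        | (i' + 1) => exact hrec.2 i' (by omega)

/-- The representation `m = C(n_k, k) + C(n_{k-1}, k-1) + Σ_{i=1}^{s} C(a_{k-i}, k-i)` with
`n_k > n_{k-1} ≥ k-2`, `a_{k-1} > … > a_{k-s} ≥ k-s > 0` and
`C(n_{k-1}, k-2) > Σ_{i=1}^{s} C(a_{k-i}, k-i)`.  Here `a i` stands for `a_{k-1-i}`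
(so the trailing sum is `∑ i ∈ Finset.range s, C(a i, k-1-i)`). -/
def LgbdRep (m k nk nk1 s : ℕ) (a : ℕ → ℕ) : Prop :=
  nk1 < nk ∧ k - 2 ≤ nk1 ∧
  (∀ i, i + 1 < s → a (i + 1) < a i) ∧
  (0 < s → s < k ∧ k - s ≤ a (s - 1)) ∧
  (∑ i ∈ Finset.range s, (a i).choose (k - 1 - i)) < nk1.choose (k - 2) ∧
  m = nk.choose k + nk1.choose (k - 1) + ∑ i ∈ Finset.range s, (a i).choose (k - 1 - i)

/-- Facts derivable from any representation. -/
lemma lgbd_rep_facts {m j nk nk1 s : ℕ} {a : ℕ → ℕ}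
    (h : LgbdRep m (j + 2) nk nk1 s a) :
    nk.choose (j + 2) ≤ m ∧ m < (nk + 1).choose (j + 2) ∧
    nk1.choose (j + 1) + (∑ i ∈ Finset.range s, (a i).choose (j + 1 - i))
      = m - nk.choose (j + 2) ∧
    m - nk.choose (j + 2) < (nk1 + 1).choose (j + 1) := by
  obtain ⟨h1, h2, hdec, hscond, hlt, heq⟩ := h
  have e2 : j + 2 - 2 = j := by omega
  have e1 : j + 2 - 1 = j + 1 := by omega
  simp only [e1, e2] at hlt heq
  have hc1 : (nk1 + 1).choose (j + 1) = nk1.choose j + nk1.choose (j + 1) :=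
    Nat.choose_succ_succ nk1 j
  have hc2 : (nk + 1).choose (j + 2) = nk.choose (j + 1) + nk.choose (j + 2) :=
    Nat.choose_succ_succ nk (j + 1)
  have hmono : (nk1 + 1).choose (j + 1) ≤ nk.choose (j + 1) :=
    Nat.choose_le_choose (j + 1) (by omega)
  omega

/-- Lemma: every `m > 0` and `k ≥ 2` admit a unique representation
`m = C(n_k, k) + C(n_{k-1}, k-1) + Σ_{i=1}^{s} C(a_{k-i}, k-i)` with `n_k > n_{k-1} ≥ k-2`,
`a_{k-1} > … > a_{k-s} ≥ k-s > 0` and `C(n_{k-1}, k-2) > Σ_{i=1}^{s} C(a_{k-i}, k-i)`. -/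
theorem lgbd_representation_unique (m k : ℕ) (hm : 0 < m) (hk : 2 ≤ k) :
    ∃ (nk nk1 s : ℕ) (a : ℕ → ℕ), LgbdRep m k nk nk1 s a ∧
      ∀ (nk' nk1' s' : ℕ) (a' : ℕ → ℕ), LgbdRep m k nk' nk1' s' a' →
        nk' = nk ∧ nk1' = nk1 ∧ s' = s ∧ ∀ i < s, a' i = a i := by
  obtain ⟨j, rfl⟩ : ∃ j, k = j + 2 := ⟨k - 2, by omega⟩
  have e2 : j + 2 - 2 = j := by omega
  have e1 : j + 2 - 1 = j + 1 := by omega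
  obtain ⟨nk, hnk1, hnk2, hnk3⟩ := lgbd_greedy (j + 2) m (by omega) hm
  have hsucc : (nk + 1).choose (j + 2) = nk.choose (j + 1) + nk.choose (j + 2) :=
    Nat.choose_succ_succ nk (j + 1)
  have hTlt : m - nk.choose (j + 2) < nk.choose (j + 1) := by omega
  rcases Nat.eq_zero_or_pos (m - nk.choose (j + 2)) with hT0 | hTpos
  · -- T = 0 case
    refine ⟨nk, j, 0, fun _ => 0, ?_, ?_⟩
    · refine ⟨by omega, by omega, by intro i hi; omega, by intro h0; omega, ?_, ?_⟩
      · simp [Nat.choose_self]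
      · simp only [e1, Finset.range_zero, Finset.sum_empty, add_zero]
        rw [Nat.choose_eq_zero_of_lt (by omega : j < j + 1)]
        omega
    · intro nk' nk1' s' a' h'
      obtain ⟨hf1, hf2, hf3, hf4⟩ := lgbd_rep_facts h'
      have hnkeq : nk' = nk := lgbd_squeeze hf1 hf2 hnk2 hnk3
      rw [hnkeq] at hf3
      have hc0 : nk1'.choose (j + 1) = 0 ∧
          (∑ i ∈ Finset.range s', (a' i).choose (j + 1 - i)) = 0 := by omega
      obtain ⟨h1', h2', hdec', hscond', hlt', heq'⟩ := h'
      have hs'0 : s' = 0 := by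
        by_contra hcon
        have hs'pos : 0 < s' := by omega
        obtain ⟨hslt, hsge⟩ := hscond' hs'pos
        have hterm : 0 < (a' (s' - 1)).choose (j + 1 - (s' - 1)) :=
          Nat.choose_pos (by omega)
        have hle : (a' (s' - 1)).choose (j + 1 - (s' - 1)) ≤
            ∑ i ∈ Finset.range s', (a' i).choose (j + 1 - i) :=
          Finset.single_le_sum (f := fun i => (a' i).choose (j + 1 - i))
            (fun i _ => Nat.zero_le _) (Finset.mem_range.2 (by omega))
        omega
      have hnk1'eq : nk1' = j := by
        by_contra hcon
        have : j + 1 ≤ nk1' := by omega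
        have := Nat.choose_pos (k := j + 1) this
        omega
      exact ⟨hnkeq, hnk1'eq, hs'0, by intro i hi; omega⟩
  · -- T ≥ 1 case
    obtain ⟨nk1, hm1, hm2, hm3⟩ := lgbd_greedy (j + 1) (m - nk.choose (j + 2)) (by omega) hTpos
    have hsucc1 : (nk1 + 1).choose (j + 1) = nk1.choose j + nk1.choose (j + 1) :=
      Nat.choose_succ_succ nk1 j
    have hnk1nk : nk1 < nk := by
      by_contra hcon
      have : nk.choose (j + 1) ≤ nk1.choose (j + 1) := Nat.choose_le_choose _ (by omega)
      omega
    obtain ⟨s, a, hsle, hdec, hlb, hfst, hsum⟩ :=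
      lgbd_cascade_exists (j + 1) (by omega) (m - nk.choose (j + 2) - nk1.choose (j + 1))
    refine ⟨nk, nk1, s, a, ?_, ?_⟩
    · refine ⟨hnk1nk, by omega, hdec, ?_, ?_, ?_⟩
      · intro h0
        refine ⟨by omega, ?_⟩
        have := hlb (s - 1) (by omega)
        omega
      · simp only [e1, e2]
        rw [← hsum]
        omega
      · simp only [e1]
        rw [← hsum]
        omega
    · intro nk' nk1' s' a' h'
      obtain ⟨hf1, hf2, hf3, hf4⟩ := lgbd_rep_facts h'
      have hnkeq : nk' = nk := lgbd_squeeze hf1 hf2 hnk2 hnk3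
      rw [hnkeq] at hf3 hf4
      have hg1 : nk1'.choose (j + 1) ≤ m - nk.choose (j + 2) := by omega
      have hnk1eq : nk1' = nk1 := lgbd_squeeze hg1 hf4 hm2 hm3
      rw [hnk1eq] at hf3
      obtain ⟨h1', h2', hdec', hscond', hlt', heq'⟩ := h'
      have hs'le : s' ≤ j + 1 := by
        rcases Nat.eq_zero_or_pos s' with rfl | h0
        · omega
        · have := (hscond' h0).1; omega
      have hlb' : ∀ i < s', j + 1 - i ≤ a' i := by
        rcases Nat.eq_zero_or_pos s' with rfl | h0
        · intro i hi; omega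
        · exact lgbd_cascade_lb hdec' (by omega) (by have := (hscond' h0).2; omega)
      have hsums : (∑ i ∈ Finset.range s', (a' i).choose (j + 1 - i))
          = ∑ i ∈ Finset.range s, (a i).choose (j + 1 - i) := by omega
      obtain ⟨hseq, haeq⟩ := lgbd_cascade_unique (j + 1) s' a' s a hs'le hsle
        hdec' hlb' hdec hlb hsums
      exact ⟨hnkeq, hnk1eq, hseq, fun i hi => haeq i (by omega)⟩
end

section
/- Let j > 0 and k > 0 be integers, and let (a_k, a_{k-1}, …, a_{k-s}) and (b_k, b_{k-1}, …, b_{k-t}) be integer sequences admissible for k. If Σ_{i=0}^{s} C(a_{k-i}, k-i) ≥ Σ_{i=0}^{t} C(b_{k-i}, k-i), then Σ_{i=0}^{s} C(a_{k-i}, j-i) ≥ Σ_{i=0}^{t} C(b_{k-i}, j-i). -/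
/-- Binomial coefficient `C(n, t)` with an integer lower index, `0` when `t < 0`. -/
def chooseZ (n : ℕ) (t : ℤ) : ℕ := if 0 ≤ t then n.choose t.toNat else 0

/-- `Σ_{i=0}^{s} C(a_{k-i}, j-i)`, where `a i` stands for `a_{k-i}`. -/
def cSumZ (a : ℕ → ℕ) (s : ℕ) (j : ℤ) : ℕ :=
  ∑ i ∈ Finset.range (s + 1), chooseZ (a i) (j - i)

lemma chooseZ_mono {n m : ℕ} (j : ℤ) (h : n ≤ m) : chooseZ n j ≤ chooseZ m j := by
  unfold chooseZ
  split
  · exact Nat.choose_le_choose _ h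
  · exact le_refl 0

lemma chooseZ_pascal (n : ℕ) (j : ℤ) :
    chooseZ (n + 1) j = chooseZ n j + chooseZ n (j - 1) := by
  unfold chooseZ
  rcases lt_trichotomy j 0 with h | h | h
  · rw [if_neg (by omega), if_neg (by omega), if_neg (by omega)]
  · subst h; simp
  · rw [if_pos (by omega), if_pos (by omega), if_pos (by omega)]
    have h1 : j.toNat = (j - 1).toNat + 1 := by omega
    rw [h1, Nat.choose_succ_succ]
    simp only [Nat.succ_eq_add_one]
    omega

lemma chooseZ_pos {n : ℕ} {j : ℤ} (h0 : 0 ≤ j) (h : j ≤ (n : ℤ)) : 0 < chooseZ n j := by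
  unfold chooseZ
  rw [if_pos h0]
  exact Nat.choose_pos (by omega)

lemma cSumZ_zero (a : ℕ → ℕ) (j : ℤ) : cSumZ a 0 j = chooseZ (a 0) j := by
  simp [cSumZ]

lemma cSumZ_shift (a : ℕ → ℕ) (t : ℕ) (j : ℤ) :
    cSumZ a (t + 1) j = chooseZ (a 0) j + cSumZ (fun i => a (i + 1)) t (j - 1) := by
  unfold cSumZ
  rw [Finset.sum_range_succ']
  rw [add_comm]
  congr 1
  · simp
  · apply Finset.sum_congr rfl
    intro i _
    congr 1
    push_cast
    ring

lemma cSumZ_first (a : ℕ → ℕ) (s : ℕ) (j : ℤ) : chooseZ (a 0) j ≤ cSumZ a s j := by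
  have h := Finset.single_le_sum (f := fun i => chooseZ (a i) (j - i))
    (fun i _ => Nat.zero_le _) (Finset.mem_range.mpr (Nat.succ_pos s))
  simpa [cSumZ] using h

/-- Chain bound for strictly decreasing sequences. -/
lemma decr_chain (b : ℕ → ℕ) (t : ℕ) (hd : ∀ i < t, b (i + 1) < b i) :
    ∀ d i, i + d ≤ t → b (i + d) + d ≤ b i := by
  intro d
  induction d with
  | zero => intro i _; simpa using le_refl (b i)
  | succ n IH =>
    intro i hi
    have h1 := IH (i + 1) (by omega)
    have h2 := hd i (by omega)
    have h3 : i + 1 + n = i + (n + 1) := by omega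
    rw [h3] at h1
    omega

/-- Tail bound: a strictly decreasing cascade sum is at most `C(a 0 + 1, j)`. -/
lemma cSumZ_le_choose (t : ℕ) : ∀ (a : ℕ → ℕ) (j : ℤ), (∀ i < t, a (i + 1) < a i) →
    cSumZ a t j ≤ chooseZ (a 0 + 1) j := by
  induction t with
  | zero =>
    intro a j _
    rw [cSumZ_zero]
    exact chooseZ_mono j (by omega)
  | succ n IH =>
    intro a j hd
    rw [cSumZ_shift]
    have h1 : cSumZ (fun i => a (i + 1)) n (j - 1) ≤ chooseZ (a 1 + 1) (j - 1) :=
      IH (fun i => a (i + 1)) (j - 1) (fun i hi => hd (i + 1) (by omega))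
    have h2 : chooseZ (a 1 + 1) (j - 1) ≤ chooseZ (a 0) (j - 1) :=
      chooseZ_mono _ (hd 0 (by omega))
    rw [chooseZ_pascal]
    omega

/-- Strict tail bound at `k` for admissible sequences. -/
lemma cSumZ_lt_choose (t : ℕ) : ∀ (a : ℕ → ℕ) (k : ℕ), t < k → (∀ i < t, a (i + 1) < a i) →
    k - t ≤ a t → cSumZ a t (k : ℤ) < chooseZ (a 0 + 1) (k : ℤ) := by
  induction t with
  | zero =>
    intro a k hk _ hlast
    rw [cSumZ_zero, chooseZ_pascal]
    have : 0 < chooseZ (a 0) ((k : ℤ) - 1) := chooseZ_pos (by omega) (by omega)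
    omega
  | succ n IH =>
    intro a k hk hd hlast
    rw [cSumZ_shift]
    have hcast : (k : ℤ) - 1 = ((k - 1 : ℕ) : ℤ) := by omega
    have h1 : cSumZ (fun i => a (i + 1)) n ((k - 1 : ℕ) : ℤ) <
        chooseZ (a 1 + 1) ((k - 1 : ℕ) : ℤ) :=
      IH (fun i => a (i + 1)) (k - 1) (by omega)
        (fun i hi => hd (i + 1) (by omega)) (by simpa using (by omega : (k - 1) - n ≤ a (n + 1)))
    have h2 : chooseZ (a 1 + 1) ((k : ℤ) - 1) ≤ chooseZ (a 0) ((k : ℤ) - 1) :=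
      chooseZ_mono _ (hd 0 (by omega))
    rw [chooseZ_pascal]
    rw [hcast] at *
    omega

theorem dim_shift_aux (s : ℕ) : ∀ (t k : ℕ) (j : ℤ) (a b : ℕ → ℕ),
    Admissible k s a → Admissible k t b →
    cSumZ b t (k : ℤ) ≤ cSumZ a s (k : ℤ) → cSumZ b t j ≤ cSumZ a s j := by
  induction s with
  | zero =>
    intro t k j a b ha hb h
    rcases lt_trichotomy (a 0) (b 0) with hab | hab | hab
    · exfalso
      have h1 := cSumZ_lt_choose 0 a k ha.1 ha.2.1 ha.2.2
      have h2 : chooseZ (a 0 + 1) (k : ℤ) ≤ chooseZ (b 0) (k : ℤ) := chooseZ_mono _ (by omega)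
      have h3 := cSumZ_first b t (k : ℤ)
      omega
    · -- a 0 = b 0
      rcases t with _ | m
      · rw [cSumZ_zero, cSumZ_zero, hab]
      · exfalso
        have hsh := cSumZ_shift b m (k : ℤ)
        have hch := decr_chain b (m + 1) hb.2.1 m 1 (by omega)
        have hpos : 0 < chooseZ (b 1) ((k : ℤ) - 1) := by
          refine chooseZ_pos (by have := hb.1; omega) ?_
          have hlast := hb.2.2
          have hb1 : b (1 + m) = b (m + 1) := by rw [add_comm]
          rw [hb1] at hch
          have := hb.1
          omega
        have hfirst : chooseZ (b 1) ((k : ℤ) - 1) ≤ cSumZ (fun i => b (i + 1)) m ((k : ℤ) - 1) :=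
          cSumZ_first (fun i => b (i + 1)) m ((k : ℤ) - 1)
        simp only [cSumZ_zero] at h
        rw [← hab] at hsh
        omega
    · have h1 := cSumZ_le_choose t b j hb.2.1
      have h2 : chooseZ (b 0 + 1) j ≤ chooseZ (a 0) j := chooseZ_mono _ (by omega)
      have h3 := cSumZ_first a 0 j
      omega
  | succ n IH =>
    intro t k j a b ha hb h
    rcases lt_trichotomy (a 0) (b 0) with hab | hab | hab
    · exfalso
      have h1 := cSumZ_lt_choose (n + 1) a k ha.1 ha.2.1 ha.2.2
      have h2 : chooseZ (a 0 + 1) (k : ℤ) ≤ chooseZ (b 0) (k : ℤ) := chooseZ_mono _ (by omega)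
      have h3 := cSumZ_first b t (k : ℤ)
      omega
    · -- a 0 = b 0
      rcases t with _ | m
      · rw [cSumZ_zero, ← hab]
        exact cSumZ_first a (n + 1) j
      · -- recurse
        have hsa := cSumZ_shift a n (k : ℤ)
        have hsb := cSumZ_shift b m (k : ℤ)
        have hcast : (k : ℤ) - 1 = ((k - 1 : ℕ) : ℤ) := by have := ha.1; omega
        have ha' : Admissible (k - 1) n (fun i => a (i + 1)) := by
          refine ⟨by have := ha.1; omega, fun i hi => ha.2.1 (i + 1) (by omega), ?_⟩
          have := ha.2.2; simpa using (by omega : (k - 1) - n ≤ a (n + 1))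
        have hb' : Admissible (k - 1) m (fun i => b (i + 1)) := by
          refine ⟨by have := hb.1; omega, fun i hi => hb.2.1 (i + 1) (by omega), ?_⟩
          have := hb.2.2; simpa using (by omega : (k - 1) - m ≤ b (m + 1))
        have h' : cSumZ (fun i => b (i + 1)) m ((k - 1 : ℕ) : ℤ) ≤
            cSumZ (fun i => a (i + 1)) n ((k - 1 : ℕ) : ℤ) := by
          rw [← hcast]
          rw [hsa, hsb, ← hab] at h
          omega
        have hrec := IH m (k - 1) (j - 1) (fun i => a (i + 1)) (fun i => b (i + 1)) ha' hb' h'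
        rw [cSumZ_shift a n j, cSumZ_shift b m j, ← hab]
        omega
    · have h1 := cSumZ_le_choose t b j hb.2.1
      have h2 : chooseZ (b 0 + 1) j ≤ chooseZ (a 0) j := chooseZ_mono _ (by omega)
      have h3 := cSumZ_first a (n + 1) j
      omega

/-- Lemma (dimension shift): for `j, k > 0` and sequences admissible for `k`, if
`Σ_{i=0}^{s} C(a_{k-i}, k-i) ≥ Σ_{i=0}^{t} C(b_{k-i}, k-i)` then
`Σ_{i=0}^{s} C(a_{k-i}, j-i) ≥ Σ_{i=0}^{t} C(b_{k-i}, j-i)`. -/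
theorem dimension_shift (j k s t : ℕ) (hj : 0 < j) (hk : 0 < k) (a b : ℕ → ℕ)
    (ha : Admissible k s a) (hb : Admissible k t b)
    (h : cSumZ b t (k : ℤ) ≤ cSumZ a s (k : ℤ)) :
    cSumZ b t (j : ℤ) ≤ cSumZ a s (j : ℤ) := by
  exact dim_shift_aux s t k (j : ℤ) a b ha hb h
end

section
/- Let k > 0 and let (c_k, …, c_{k-u}), (a_k, …, a_{k-s}), (b_k, …, b_{k-t}) be integer sequences admissible for k. If Σ_{i=0}^{u} C(c_{k-i}, k-i) = Σ_{i=0}^{s} C(a_{k-i}, k-i) + Σ_{i=0}^{t} C(b_{k-i}, k-i), then Σ_{i=0}^{u} C(c_{k-i}, k-i+1) ≥ Σ_{i=0}^{s} C(a_{k-i}, k-i+1) + Σ_{i=0}^{t} C(b_{k-i}, k-i+1). Equivalently, oldbd_k(m+n) ≥ oldbd_k(m) + oldbd_k(n) for all positive integers m, n. -/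
/-- The leading term `n_k` of the `k`-th cascade representation of `m`:
the largest `n` with `C(n, k) ≤ m`. -/
noncomputable def leadingTerm (m k : ℕ) : ℕ := sSup {n | n.choose k ≤ m}

/-- `oldbd_k(m) = Σ_{i=0}^{s} C(n_{k-i}, k-i+1)` where
`m = Σ_{i=0}^{s} C(n_{k-i}, k-i)` is the `k`-th cascade representation of `m`,
computed greedily. -/
noncomputable def oldbdFn : ℕ → ℕ → ℕ
  | 0, _ => 0
  | _ + 1, 0 => 0
  | k + 1, m + 1 =>
    let n := leadingTerm (m + 1) (k + 1)
    n.choose (k + 2) + oldbdFn k (m + 1 - n.choose (k + 1))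

namespace DU

/-- The "avoiding 0" companion transform: on the cascade representation it maps
`Σ C(nᵢ, k-i)` to `Σ C(nᵢ - 1, k-i)`. -/
noncomputable def avoidFn : ℕ → ℕ → ℕ
  | 0, _ => 0
  | _ + 1, 0 => 0
  | k + 1, m + 1 =>
    let n := leadingTerm (m + 1) (k + 1)
    (n - 1).choose (k + 1) + avoidFn k (m + 1 - n.choose (k + 1))

lemma oldbdFn_zero (k : ℕ) : oldbdFn k 0 = 0 := by cases k <;> rfl
lemma avoidFn_zero (k : ℕ) : avoidFn k 0 = 0 := by cases k <;> rfl
lemma oldbdFn_zero' (m : ℕ) : oldbdFn 0 m = 0 := rfl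
lemma avoidFn_zero' (m : ℕ) : avoidFn 0 m = 0 := rfl

lemma pascal_succ (n k : ℕ) : (n + 1).choose (k + 1) = n.choose k + n.choose (k + 1) :=
  Nat.choose_succ_succ n k

lemma pascal (M k : ℕ) (hM : 1 ≤ M) :
    M.choose (k + 1) = (M - 1).choose k + (M - 1).choose (k + 1) := by
  cases M with
  | zero => omega
  | succ M => simpa using pascal_succ M k

lemma sub_le_choose (k : ℕ) : ∀ n : ℕ, n - k ≤ n.choose (k + 1) := by
  induction k with
  | zero => intro n; simp
  | succ k ih =>
    intro n
    cases n with
    | zero => simp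
    | succ n =>
      rw [pascal_succ]
      have := ih n
      omega

lemma choose_lt_choose_succ {M k : ℕ} (h : k ≤ M) :
    M.choose (k + 1) < (M + 1).choose (k + 1) := by
  rw [pascal_succ]
  have := Nat.choose_pos h
  omega

lemma leadingTerm_spec (k m : ℕ) (hm : 1 ≤ m) :
    k + 1 ≤ leadingTerm m (k + 1) ∧ (leadingTerm m (k + 1)).choose (k + 1) ≤ m ∧
      m < (leadingTerm m (k + 1) + 1).choose (k + 1) := by
  have hbdd : BddAbove {n : ℕ | n.choose (k + 1) ≤ m} := by
    refine ⟨m + k + 1, mem_upperBounds.2 fun n hn => ?_⟩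
    simp only [Set.mem_setOf_eq] at hn
    have := sub_le_choose k n
    show n ≤ m + k + 1
    omega
  have hk1 : (k + 1) ∈ {n : ℕ | n.choose (k + 1) ≤ m} := by
    simp only [Set.mem_setOf_eq, Nat.choose_self]; omega
  have hne : {n : ℕ | n.choose (k + 1) ≤ m}.Nonempty := ⟨k + 1, hk1⟩
  have hmem : (leadingTerm m (k + 1)).choose (k + 1) ≤ m := Nat.sSup_mem hne hbdd
  refine ⟨le_csSup hbdd hk1, hmem, ?_⟩
  by_contra h
  push_neg at h
  have h2 : leadingTerm m (k + 1) + 1 ≤ leadingTerm m (k + 1) :=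
    le_csSup hbdd (show leadingTerm m (k + 1) + 1 ∈ {n : ℕ | n.choose (k + 1) ≤ m} from h)
  omega

lemma leadingTerm_eq (k M r : ℕ) (hM : k + 1 ≤ M) (hr : r < M.choose k) :
    leadingTerm (M.choose (k + 1) + r) (k + 1) = M := by
  have hub : ∀ n ∈ {n : ℕ | n.choose (k + 1) ≤ M.choose (k + 1) + r}, n ≤ M := by
    intro n hn
    simp only [Set.mem_setOf_eq] at hn
    by_contra h
    push_neg at h
    have h2 : (M + 1).choose (k + 1) ≤ n.choose (k + 1) := Nat.choose_le_choose _ h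
    rw [pascal_succ] at h2
    omega
  have hbdd : BddAbove {n : ℕ | n.choose (k + 1) ≤ M.choose (k + 1) + r} :=
    ⟨M, mem_upperBounds.2 hub⟩
  exact le_antisymm
    (csSup_le ⟨M, show M.choose (k + 1) ≤ M.choose (k + 1) + r from Nat.le_add_right _ _⟩ hub)
    (le_csSup hbdd (show M.choose (k + 1) ≤ M.choose (k + 1) + r from Nat.le_add_right _ _))

lemma exists_decomp (k m : ℕ) (hm : 1 ≤ m) :
    ∃ M r, k + 1 ≤ M ∧ r < M.choose k ∧ m = M.choose (k + 1) + r := by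
  obtain ⟨h1, h2, h3⟩ := leadingTerm_spec k m hm
  rw [pascal_succ] at h3
  exact ⟨leadingTerm m (k + 1), m - (leadingTerm m (k + 1)).choose (k + 1), h1,
    by omega, by omega⟩

lemma oldbdFn_block (k M r : ℕ) (hM : k + 1 ≤ M) (hr : r < M.choose k) :
    oldbdFn (k + 1) (M.choose (k + 1) + r) = M.choose (k + 2) + oldbdFn k r := by
  have hpos : 0 < M.choose (k + 1) := Nat.choose_pos hM
  obtain ⟨m, hm⟩ : ∃ m, M.choose (k + 1) + r = m + 1 := ⟨M.choose (k + 1) + r - 1, by omega⟩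
  rw [hm,
    show oldbdFn (k + 1) (m + 1) = (leadingTerm (m + 1) (k + 1)).choose (k + 2)
        + oldbdFn k (m + 1 - (leadingTerm (m + 1) (k + 1)).choose (k + 1)) from rfl,
    ← hm, leadingTerm_eq k M r hM hr,
    show M.choose (k + 1) + r - M.choose (k + 1) = r by omega]

lemma avoidFn_block (k M r : ℕ) (hM : k + 1 ≤ M) (hr : r < M.choose k) :
    avoidFn (k + 1) (M.choose (k + 1) + r) = (M - 1).choose (k + 1) + avoidFn k r := by
  have hpos : 0 < M.choose (k + 1) := Nat.choose_pos hM
  obtain ⟨m, hm⟩ : ∃ m, M.choose (k + 1) + r = m + 1 := ⟨M.choose (k + 1) + r - 1, by omega⟩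
  rw [hm,
    show avoidFn (k + 1) (m + 1) = (leadingTerm (m + 1) (k + 1) - 1).choose (k + 1)
        + avoidFn k (m + 1 - (leadingTerm (m + 1) (k + 1)).choose (k + 1)) from rfl,
    ← hm, leadingTerm_eq k M r hM hr,
    show M.choose (k + 1) + r - M.choose (k + 1) = r by omega]

lemma oldbdFn_full (k N : ℕ) (h : k + 1 ≤ N) :
    oldbdFn (k + 1) (N.choose (k + 1)) = N.choose (k + 2) := by
  have h0 := oldbdFn_block k N 0 h (Nat.choose_pos (by omega))
  simpa [oldbdFn_zero] using h0

lemma avoidFn_full (k N : ℕ) (h : k + 1 ≤ N) :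
    avoidFn (k + 1) (N.choose (k + 1)) = (N - 1).choose (k + 1) := by
  have h0 := avoidFn_block k N 0 h (Nat.choose_pos (by omega))
  simpa [avoidFn_zero] using h0

lemma oldbdFn_le : ∀ k N m, k ≤ N → m ≤ N.choose k → oldbdFn k m ≤ N.choose (k + 1) := by
  intro k
  induction k with
  | zero => intro N m _ _; simp [oldbdFn_zero']
  | succ k ih =>
    intro N m hN hm
    show oldbdFn (k + 1) m ≤ N.choose (k + 2)
    rcases Nat.eq_zero_or_pos m with rfl | hm1
    · simp [oldbdFn_zero]
    obtain ⟨M, r, hM, hr, rfl⟩ := exists_decomp k m hm1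
    have hMN : M ≤ N := by
      by_contra h
      push_neg at h
      have h2 : (N + 1).choose (k + 1) ≤ M.choose (k + 1) := Nat.choose_le_choose _ h
      rw [pascal_succ] at h2
      have hpos : 0 < N.choose k := Nat.choose_pos (by omega)
      omega
    rw [oldbdFn_block k M r hM hr]
    rcases eq_or_lt_of_le hMN with rfl | hMN'
    · have hr0 : r = 0 := by omega
      subst hr0
      simp [oldbdFn_zero]
    · have h1 : oldbdFn k r ≤ M.choose (k + 1) := ih M r (by omega) (le_of_lt hr)
      have h2 : (M + 1).choose (k + 2) = M.choose (k + 1) + M.choose (k + 2) :=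
        pascal_succ M (k + 1)
      have h3 : (M + 1).choose (k + 2) ≤ N.choose (k + 2) := Nat.choose_le_choose _ (by omega)
      omega

lemma avoidFn_le : ∀ k N m, k ≤ N → m ≤ N.choose k → avoidFn k m ≤ (N - 1).choose k := by
  intro k
  induction k with
  | zero => intro N m _ _; simp [avoidFn_zero']
  | succ k ih =>
    intro N m hN hm
    rcases Nat.eq_zero_or_pos m with rfl | hm1
    · simp [avoidFn_zero]
    obtain ⟨M, r, hM, hr, rfl⟩ := exists_decomp k m hm1
    have hMN : M ≤ N := by
      by_contra h
      push_neg at h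
      have h2 : (N + 1).choose (k + 1) ≤ M.choose (k + 1) := Nat.choose_le_choose _ h
      rw [pascal_succ] at h2
      have hpos : 0 < N.choose k := Nat.choose_pos (by omega)
      omega
    rw [avoidFn_block k M r hM hr]
    rcases eq_or_lt_of_le hMN with rfl | hMN'
    · have hr0 : r = 0 := by omega
      subst hr0
      simp [avoidFn_zero]
    · have h1 : avoidFn k r ≤ (M - 1).choose k := ih M r (by omega) (le_of_lt hr)
      have h2 : M.choose (k + 1) = (M - 1).choose k + (M - 1).choose (k + 1) :=
        pascal M k (by omega)
      have h3 : M.choose (k + 1) ≤ (N - 1).choose (k + 1) := Nat.choose_le_choose _ (by omega)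
      omega

lemma avoidFn_lt : ∀ k N m, k + 1 ≤ N → m < N.choose k → avoidFn k m < (N - 1).choose k := by
  intro k
  induction k with
  | zero =>
    intro N m hN hm
    have h1 : (N - 1).choose 0 = 1 := Nat.choose_zero_right _
    have h2 : avoidFn 0 m = 0 := avoidFn_zero' m
    omega
  | succ k ih =>
    intro N m hN hm
    rcases Nat.eq_zero_or_pos m with rfl | hm1
    · rw [avoidFn_zero]
      exact Nat.choose_pos (by omega)
    obtain ⟨M, r, hM, hr, rfl⟩ := exists_decomp k m hm1
    have hMN : M < N := by
      by_contra h
      push_neg at h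
      have h2 : N.choose (k + 1) ≤ M.choose (k + 1) := Nat.choose_le_choose _ h
      omega
    rw [avoidFn_block k M r hM hr]
    rcases eq_or_lt_of_le (show M ≤ N - 1 by omega) with heq | hMN'
    · rw [← heq]
      have h1 : avoidFn k r < (M - 1).choose k := ih M r (by omega) hr
      have h2 : M.choose (k + 1) = (M - 1).choose k + (M - 1).choose (k + 1) :=
        pascal M k (by omega)
      omega
    · have h1 : avoidFn k r ≤ (M - 1).choose k := avoidFn_le k M r (by omega) (le_of_lt hr)
      have h2 : M.choose (k + 1) = (M - 1).choose k + (M - 1).choose (k + 1) :=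
        pascal M k (by omega)
      have h3 : M.choose (k + 1) < (M + 1).choose (k + 1) :=
        choose_lt_choose_succ (show k ≤ M by omega)
      have h4 : (M + 1).choose (k + 1) ≤ (N - 1).choose (k + 1) :=
        Nat.choose_le_choose _ (by omega)
      omega

lemma avoidFn_le_self : ∀ k m, avoidFn k m ≤ m := by
  intro k
  induction k with
  | zero => intro m; simp [avoidFn_zero']
  | succ k ih =>
    intro m
    rcases Nat.eq_zero_or_pos m with rfl | hm1
    · simp [avoidFn_zero]
    obtain ⟨M, r, hM, hr, rfl⟩ := exists_decomp k m hm1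
    rw [avoidFn_block k M r hM hr]
    have h1 := ih r
    have h2 : (M - 1).choose (k + 1) ≤ M.choose (k + 1) :=
      Nat.choose_le_choose _ (by omega)
    omega

lemma avoidFn_lt_self (k : ℕ) : ∀ m, 1 ≤ m → avoidFn (k + 1) m < m := by
  intro m hm1
  obtain ⟨M, r, hM, hr, rfl⟩ := exists_decomp k m hm1
  rw [avoidFn_block k M r hM hr]
  have h1 := avoidFn_le_self k r
  have h2 : M.choose (k + 1) = (M - 1).choose k + (M - 1).choose (k + 1) :=
    pascal M k (by omega)
  have h3 : 0 < (M - 1).choose k := Nat.choose_pos (by omega)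
  omega

lemma oldbdFn_mono (k m : ℕ) : oldbdFn k m ≤ oldbdFn k (m + 1) := by
  induction k generalizing m with
  | zero => simp [oldbdFn_zero']
  | succ k ih =>
    rcases Nat.eq_zero_or_pos m with rfl | hm1
    · simp [oldbdFn_zero]
    obtain ⟨M, r, hM, hr, rfl⟩ := exists_decomp k m hm1
    rcases lt_or_eq_of_le (Nat.succ_le_of_lt hr) with h | h
    · have e1 : M.choose (k + 1) + r + 1 = M.choose (k + 1) + (r + 1) := by omega
      rw [e1, oldbdFn_block k M r hM hr, oldbdFn_block k M (r + 1) hM h]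
      have := ih r
      omega
    · have e1 : M.choose (k + 1) + r + 1 = (M + 1).choose (k + 1) := by
        rw [pascal_succ]
        omega
      rw [e1, oldbdFn_full k (M + 1) (by omega), oldbdFn_block k M r hM hr]
      have h1 : oldbdFn k r ≤ M.choose (k + 1) := oldbdFn_le k M r (by omega) (le_of_lt hr)
      have h2 : (M + 1).choose (k + 2) = M.choose (k + 1) + M.choose (k + 2) :=
        pascal_succ M (k + 1)
      omega

lemma oldbdFn_mono' (k m n : ℕ) (h : m ≤ n) : oldbdFn k m ≤ oldbdFn k n := by
  obtain ⟨d, rfl⟩ := Nat.exists_eq_add_of_le h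
  clear h
  induction d with
  | zero => exact le_rfl
  | succ d ih => exact le_trans ih (oldbdFn_mono k (m + d))

lemma small : ∀ k m, m ≤ k → oldbdFn k m = 0 ∧ avoidFn k m = 0 := by
  intro k
  induction k with
  | zero =>
    intro m hm
    have h0 : m = 0 := by omega
    subst h0
    exact ⟨rfl, rfl⟩
  | succ k ih =>
    intro m hm
    rcases Nat.eq_zero_or_pos m with rfl | hm1
    · exact ⟨oldbdFn_zero _, avoidFn_zero _⟩
    have hself : (k + 1).choose (k + 1) = 1 := Nat.choose_self _
    have hsucc : (k + 1).choose k = k + 1 := Nat.choose_succ_self_right k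
    have e1 : m = (k + 1).choose (k + 1) + (m - 1) := by omega
    have hrr : m - 1 < (k + 1).choose k := by omega
    obtain ⟨ih1, ih2⟩ := ih (m - 1) (by omega)
    constructor
    · rw [e1, oldbdFn_block k (k + 1) (m - 1) le_rfl hrr, ih1,
        Nat.choose_eq_zero_of_lt (by omega)]
    · rw [e1, avoidFn_block k (k + 1) (m - 1) le_rfl hrr, ih2,
        Nat.choose_eq_zero_of_lt (by omega)]

lemma key : ∀ k m, oldbdFn k m = avoidFn k m + oldbdFn k (avoidFn k m) := by
  intro k
  induction k with
  | zero => intro m; simp [oldbdFn_zero', avoidFn_zero']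
  | succ k ih =>
    intro m
    rcases le_or_gt m (k + 1) with hm | hm
    · obtain ⟨h1, h2⟩ := small (k + 1) m hm
      rw [h1, h2, oldbdFn_zero]
    obtain ⟨M, r, hM, hr, rfl⟩ := exists_decomp k m (by omega)
    have hM2 : k + 2 ≤ M := by
      rcases eq_or_lt_of_le hM with heq | h
      · exfalso
        rw [← heq] at hr hm
        have hself : (k + 1).choose (k + 1) = 1 := Nat.choose_self _
        have hsucc : (k + 1).choose k = k + 1 := Nat.choose_succ_self_right k
        omega
      · omega
    have hαlt : avoidFn k r < (M - 1).choose k := avoidFn_lt k M r (by omega) hr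
    have havm : avoidFn (k + 1) (M.choose (k + 1) + r)
        = (M - 1).choose (k + 1) + avoidFn k r := avoidFn_block k M r hM hr
    have hfA : oldbdFn (k + 1) ((M - 1).choose (k + 1) + avoidFn k r)
        = (M - 1).choose (k + 2) + oldbdFn k (avoidFn k r) :=
      oldbdFn_block k (M - 1) (avoidFn k r) (by omega) hαlt
    have hfm : oldbdFn (k + 1) (M.choose (k + 1) + r) = M.choose (k + 2) + oldbdFn k r :=
      oldbdFn_block k M r hM hr
    have hihr := ih r
    have hp : M.choose (k + 2) = (M - 1).choose (k + 1) + (M - 1).choose (k + 2) :=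
      pascal M (k + 1) (by omega)
    rw [hfm, havm, hfA]
    omega

lemma oldbdFn_block_ext (k M i : ℕ) (hM : k + 2 ≤ M) (hi : i ≤ M.choose (k + 1)) :
    oldbdFn (k + 2) (M.choose (k + 2) + i) = M.choose (k + 3) + oldbdFn (k + 1) i := by
  rcases lt_or_eq_of_le hi with h | h
  · exact oldbdFn_block (k + 1) M i hM h
  · subst h
    have e1 : M.choose (k + 2) + M.choose (k + 1) = (M + 1).choose (k + 2) := by
      have hps : (M + 1).choose (k + 2) = M.choose (k + 1) + M.choose (k + 2) :=
        pascal_succ M (k + 1)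
      omega
    rw [e1]
    have e2 : oldbdFn (k + 2) ((M + 1).choose (k + 2)) = (M + 1).choose (k + 3) :=
      oldbdFn_full (k + 1) (M + 1) (by omega)
    rw [e2]
    have e3 : oldbdFn (k + 1) (M.choose (k + 1)) = M.choose (k + 2) :=
      oldbdFn_full k M (by omega)
    rw [e3]
    have e4 : (M + 1).choose (k + 3) = M.choose (k + 2) + M.choose (k + 3) :=
      pascal_succ M (k + 2)
    omega

lemma avoidFn_one (m : ℕ) (hm : 1 ≤ m) : avoidFn 1 m = m - 1 := by
  have hdec : ∃ M r, 1 ≤ M ∧ r < M.choose 0 ∧ m = M.choose 1 + r := exists_decomp 0 m hm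
  obtain ⟨M, r, hM, hr, rfl⟩ := hdec
  have hr0 : r = 0 := by
    have : M.choose 0 = 1 := Nat.choose_zero_right _
    omega
  subst hr0
  have hb : avoidFn 1 (M.choose 1 + 0) = (M - 1).choose 1 + avoidFn 0 0 :=
    avoidFn_block 0 M 0 hM hr
  rw [hb, avoidFn_zero']
  have h1 : M.choose 1 = M := Nat.choose_one_right _
  have h2 : (M - 1).choose 1 = M - 1 := Nat.choose_one_right _
  omega

lemma oldbdFn_one : ∀ m, oldbdFn 1 m = m.choose 2 := by
  intro m
  rcases Nat.eq_zero_or_pos m with rfl | hm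
  · simp [oldbdFn_zero]
  have hdec : ∃ M r, 1 ≤ M ∧ r < M.choose 0 ∧ m = M.choose 1 + r := exists_decomp 0 m hm
  obtain ⟨M, r, hM, hr, rfl⟩ := hdec
  have hr0 : r = 0 := by
    have : M.choose 0 = 1 := Nat.choose_zero_right _
    omega
  subst hr0
  have hb : oldbdFn 1 (M.choose 1 + 0) = M.choose 2 + oldbdFn 0 0 :=
    oldbdFn_block 0 M 0 hM hr
  rw [hb, oldbdFn_zero']
  have h1 : M.choose 1 = M := Nat.choose_one_right _
  rw [show M.choose 1 + 0 = M by omega]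
  omega

lemma R_le : ∀ k M r, k + 1 ≤ M → r ≤ M.choose (k + 1) →
    r - avoidFn (k + 1) r ≤ (M - 1).choose k := by
  intro k
  induction k with
  | zero =>
    intro M r hM hr
    show r - avoidFn 1 r ≤ (M - 1).choose 0
    rcases Nat.eq_zero_or_pos r with rfl | hr1
    · omega
    · have h1 : avoidFn 1 r = r - 1 := avoidFn_one r hr1
      have h2 : (M - 1).choose 0 = 1 := Nat.choose_zero_right _
      omega
  | succ k ih =>
    intro M r hM' hr'
    show r - avoidFn (k + 2) r ≤ (M - 1).choose (k + 1)
    have hM : k + 2 ≤ M := hM'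
    have hr : r ≤ M.choose (k + 2) := hr'
    rcases Nat.eq_zero_or_pos r with rfl | hr1
    · omega
    have hdec : ∃ Mr s, k + 2 ≤ Mr ∧ s < Mr.choose (k + 1) ∧ r = Mr.choose (k + 2) + s :=
      exists_decomp (k + 1) r hr1
    obtain ⟨Mr, s, hMr, hs, rfl⟩ := hdec
    have hMrM : Mr ≤ M := by
      by_contra h
      push_neg at h
      have h2 : (M + 1).choose (k + 2) ≤ Mr.choose (k + 2) := Nat.choose_le_choose _ h
      have h3 : (M + 1).choose (k + 2) = M.choose (k + 1) + M.choose (k + 2) :=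
        pascal_succ M (k + 1)
      have h4 : 0 < M.choose (k + 1) := Nat.choose_pos (by omega)
      omega
    have hb : avoidFn (k + 2) (Mr.choose (k + 2) + s)
        = (Mr - 1).choose (k + 2) + avoidFn (k + 1) s := avoidFn_block (k + 1) Mr s hMr hs
    rw [hb]
    have h5 : avoidFn (k + 1) s ≤ s := avoidFn_le_self (k + 1) s
    have hp : Mr.choose (k + 2) = (Mr - 1).choose (k + 1) + (Mr - 1).choose (k + 2) :=
      pascal Mr (k + 1) (by omega)
    have ih' : s - avoidFn (k + 1) s ≤ (Mr - 1).choose k := ih Mr s (by omega) (le_of_lt hs)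
    rcases eq_or_lt_of_le hMrM with heq | hlt
    · subst heq
      omega
    · have hq : Mr.choose (k + 1) = (Mr - 1).choose k + (Mr - 1).choose (k + 1) :=
        pascal Mr k (by omega)
      have hmono : Mr.choose (k + 1) ≤ (M - 1).choose (k + 1) :=
        Nat.choose_le_choose _ (by omega)
      omega

lemma L7 : ∀ k m, avoidFn (k + 2) m ≤ oldbdFn (k + 1) (m - avoidFn (k + 2) m) := by
  intro k
  induction k with
  | zero =>
    intro m
    show avoidFn 2 m ≤ oldbdFn 1 (m - avoidFn 2 m)
    rcases Nat.eq_zero_or_pos m with rfl | hm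
    · rw [avoidFn_zero]
      exact Nat.zero_le _
    have hdec : ∃ M r, 2 ≤ M ∧ r < M.choose 1 ∧ m = M.choose 2 + r := exists_decomp 1 m hm
    obtain ⟨M, r, hM, hr, rfl⟩ := hdec
    have hb : avoidFn 2 (M.choose 2 + r) = (M - 1).choose 2 + avoidFn 1 r :=
      avoidFn_block 1 M r hM hr
    rw [hb]
    have hrM : r < M := by
      have : M.choose 1 = M := Nat.choose_one_right M
      omega
    have hp : M.choose 2 = (M - 1).choose 1 + (M - 1).choose 2 := pascal M 1 (by omega)
    have hc1 : (M - 1).choose 1 = M - 1 := Nat.choose_one_right _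
    rcases Nat.eq_zero_or_pos r with rfl | hr1
    · have h0 : avoidFn 1 0 = 0 := avoidFn_zero 1
      rw [h0]
      have e : M.choose 2 + 0 - ((M - 1).choose 2 + 0) = M - 1 := by omega
      rw [e]
      have h1 : oldbdFn 1 (M - 1) = (M - 1).choose 2 := oldbdFn_one (M - 1)
      omega
    · have h0 : avoidFn 1 r = r - 1 := avoidFn_one r hr1
      rw [h0]
      have e : M.choose 2 + r - ((M - 1).choose 2 + (r - 1)) = M := by omega
      rw [e]
      have h1 : oldbdFn 1 M = M.choose 2 := oldbdFn_one M
      omega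
  | succ k ih =>
    intro m
    show avoidFn (k + 3) m ≤ oldbdFn (k + 2) (m - avoidFn (k + 3) m)
    rcases Nat.eq_zero_or_pos m with rfl | hm
    · rw [avoidFn_zero]
      exact Nat.zero_le _
    have hdec : ∃ M r, k + 3 ≤ M ∧ r < M.choose (k + 2) ∧ m = M.choose (k + 3) + r :=
      exists_decomp (k + 2) m hm
    obtain ⟨M, r, hM, hr, rfl⟩ := hdec
    have hb : avoidFn (k + 3) (M.choose (k + 3) + r)
        = (M - 1).choose (k + 3) + avoidFn (k + 2) r := avoidFn_block (k + 2) M r hM hr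
    rw [hb]
    have hα : avoidFn (k + 2) r ≤ r := avoidFn_le_self (k + 2) r
    have hRle : r - avoidFn (k + 2) r ≤ (M - 1).choose (k + 1) :=
      R_le (k + 1) M r (by omega) (le_of_lt hr)
    have hp : M.choose (k + 3) = (M - 1).choose (k + 2) + (M - 1).choose (k + 3) :=
      pascal M (k + 2) (by omega)
    have e : M.choose (k + 3) + r - ((M - 1).choose (k + 3) + avoidFn (k + 2) r)
        = (M - 1).choose (k + 2) + (r - avoidFn (k + 2) r) := by omega
    rw [e]
    have hext : oldbdFn (k + 2) ((M - 1).choose (k + 2) + (r - avoidFn (k + 2) r))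
        = (M - 1).choose (k + 3) + oldbdFn (k + 1) (r - avoidFn (k + 2) r) :=
      oldbdFn_block_ext k (M - 1) (r - avoidFn (k + 2) r) (by omega) hRle
    rw [hext]
    have hih := ih r
    omega

lemma L8 : ∀ k m, 1 ≤ m →
    oldbdFn (k + 1) (m - avoidFn (k + 2) m - 1) ≤ avoidFn (k + 2) m := by
  intro k
  induction k with
  | zero =>
    intro m hm
    show oldbdFn 1 (m - avoidFn 2 m - 1) ≤ avoidFn 2 m
    have hdec : ∃ M r, 2 ≤ M ∧ r < M.choose 1 ∧ m = M.choose 2 + r := exists_decomp 1 m hm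
    obtain ⟨M, r, hM, hr, rfl⟩ := hdec
    have hb : avoidFn 2 (M.choose 2 + r) = (M - 1).choose 2 + avoidFn 1 r :=
      avoidFn_block 1 M r hM hr
    rw [hb]
    have hrM : r < M := by
      have : M.choose 1 = M := Nat.choose_one_right M
      omega
    have hp : M.choose 2 = (M - 1).choose 1 + (M - 1).choose 2 := pascal M 1 (by omega)
    have hc1 : (M - 1).choose 1 = M - 1 := Nat.choose_one_right _
    rcases Nat.eq_zero_or_pos r with rfl | hr1
    · have h0 : avoidFn 1 0 = 0 := avoidFn_zero 1
      rw [h0]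
      have e : M.choose 2 + 0 - ((M - 1).choose 2 + 0) - 1 = M - 2 := by omega
      rw [e]
      have h1 : oldbdFn 1 (M - 2) = (M - 2).choose 2 := oldbdFn_one _
      have h2 : (M - 2).choose 2 ≤ (M - 1).choose 2 := Nat.choose_le_choose _ (by omega)
      omega
    · have h0 : avoidFn 1 r = r - 1 := avoidFn_one r hr1
      rw [h0]
      have e : M.choose 2 + r - ((M - 1).choose 2 + (r - 1)) - 1 = M - 1 := by omega
      rw [e]
      have h1 : oldbdFn 1 (M - 1) = (M - 1).choose 2 := oldbdFn_one _
      omega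
  | succ k ih =>
    intro m hm
    show oldbdFn (k + 2) (m - avoidFn (k + 3) m - 1) ≤ avoidFn (k + 3) m
    have hdec : ∃ M r, k + 3 ≤ M ∧ r < M.choose (k + 2) ∧ m = M.choose (k + 3) + r :=
      exists_decomp (k + 2) m hm
    obtain ⟨M, r, hM, hr, rfl⟩ := hdec
    have hb : avoidFn (k + 3) (M.choose (k + 3) + r)
        = (M - 1).choose (k + 3) + avoidFn (k + 2) r := avoidFn_block (k + 2) M r hM hr
    rw [hb]
    have hα : avoidFn (k + 2) r ≤ r := avoidFn_le_self (k + 2) r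
    have hp : M.choose (k + 3) = (M - 1).choose (k + 2) + (M - 1).choose (k + 3) :=
      pascal M (k + 2) (by omega)
    rcases Nat.eq_zero_or_pos r with rfl | hr1
    · have h0 : avoidFn (k + 2) 0 = 0 := avoidFn_zero _
      rw [h0]
      have e : M.choose (k + 3) + 0 - ((M - 1).choose (k + 3) + 0) - 1
          = (M - 1).choose (k + 2) - 1 := by omega
      rw [e]
      have h1 : oldbdFn (k + 2) ((M - 1).choose (k + 2) - 1) ≤ (M - 1).choose (k + 3) :=
        oldbdFn_le (k + 2) (M - 1) _ (by omega) (by omega)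
      omega
    · have hR1 : avoidFn (k + 2) r < r := avoidFn_lt_self (k + 1) r hr1
      have hRle : r - avoidFn (k + 2) r ≤ (M - 1).choose (k + 1) :=
        R_le (k + 1) M r (by omega) (le_of_lt hr)
      have e : M.choose (k + 3) + r - ((M - 1).choose (k + 3) + avoidFn (k + 2) r) - 1
          = (M - 1).choose (k + 2) + (r - avoidFn (k + 2) r - 1) := by omega
      rw [e]
      have hext : oldbdFn (k + 2) ((M - 1).choose (k + 2) + (r - avoidFn (k + 2) r - 1))
          = (M - 1).choose (k + 3) + oldbdFn (k + 1) (r - avoidFn (k + 2) r - 1) :=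
        oldbdFn_block_ext k (M - 1) (r - avoidFn (k + 2) r - 1) (by omega) (by omega)
      rw [hext]
      have hih := ih r hr1
      omega

theorem superadd : ∀ k m n, oldbdFn k m + oldbdFn k n ≤ oldbdFn k (m + n) := by
  intro k
  induction k with
  | zero => intro m n; simp [oldbdFn_zero']
  | succ k ihf =>
    have Asup : ∀ m n, avoidFn (k + 1) m + avoidFn (k + 1) n ≤ avoidFn (k + 1) (m + n) := by
      cases k with
      | zero =>
        intro m n
        show avoidFn 1 m + avoidFn 1 n ≤ avoidFn 1 (m + n)
        rcases Nat.eq_zero_or_pos m with rfl | hm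
        · simp [avoidFn_zero]
        rcases Nat.eq_zero_or_pos n with rfl | hn
        · simp [avoidFn_zero]
        rw [avoidFn_one m hm, avoidFn_one n hn, avoidFn_one (m + n) (by omega)]
        omega
      | succ k' =>
        intro m n
        show avoidFn (k' + 2) m + avoidFn (k' + 2) n ≤ avoidFn (k' + 2) (m + n)
        rcases Nat.eq_zero_or_pos m with rfl | hm
        · simp [avoidFn_zero]
        rcases Nat.eq_zero_or_pos n with rfl | hn
        · simp [avoidFn_zero]
        by_contra hcon
        push_neg at hcon
        have h1 : avoidFn (k' + 2) m ≤ oldbdFn (k' + 1) (m - avoidFn (k' + 2) m) := L7 k' m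
        have h2 : avoidFn (k' + 2) n ≤ oldbdFn (k' + 1) (n - avoidFn (k' + 2) n) := L7 k' n
        have h3 : oldbdFn (k' + 1) (m + n - avoidFn (k' + 2) (m + n) - 1)
            ≤ avoidFn (k' + 2) (m + n) := L8 k' (m + n) (by omega)
        have hm' : avoidFn (k' + 2) m < m := avoidFn_lt_self (k' + 1) m hm
        have hn' : avoidFn (k' + 2) n < n := avoidFn_lt_self (k' + 1) n hn
        have hsum : (m - avoidFn (k' + 2) m) + (n - avoidFn (k' + 2) n)
            ≤ m + n - avoidFn (k' + 2) (m + n) - 1 := by omega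
        have h4 : oldbdFn (k' + 1) ((m - avoidFn (k' + 2) m) + (n - avoidFn (k' + 2) n))
            ≤ oldbdFn (k' + 1) (m + n - avoidFn (k' + 2) (m + n) - 1) :=
          oldbdFn_mono' (k' + 1) _ _ hsum
        have h5 : oldbdFn (k' + 1) (m - avoidFn (k' + 2) m)
              + oldbdFn (k' + 1) (n - avoidFn (k' + 2) n)
            ≤ oldbdFn (k' + 1) ((m - avoidFn (k' + 2) m) + (n - avoidFn (k' + 2) n)) :=
          ihf _ _
        omega
    have fsup : ∀ N m n, m + n ≤ N →
        oldbdFn (k + 1) m + oldbdFn (k + 1) n ≤ oldbdFn (k + 1) (m + n) := by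
      intro N
      induction N with
      | zero =>
        intro m n h
        obtain ⟨rfl, rfl⟩ : m = 0 ∧ n = 0 := by omega
        simp [oldbdFn_zero]
      | succ N ihN =>
        intro m n hmn
        rcases Nat.eq_zero_or_pos m with rfl | hm
        · simp [oldbdFn_zero]
        rcases Nat.eq_zero_or_pos n with rfl | hn
        · simp [oldbdFn_zero]
        have h1 := Asup m n
        have hkm := key (k + 1) m
        have hkn := key (k + 1) n
        have hkmn := key (k + 1) (m + n)
        have h2 : avoidFn (k + 1) m < m := avoidFn_lt_self k m hm
        have h3 : avoidFn (k + 1) n < n := avoidFn_lt_self k n hn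
        have h4 := ihN (avoidFn (k + 1) m) (avoidFn (k + 1) n) (by omega)
        have h6 : oldbdFn (k + 1) (avoidFn (k + 1) m + avoidFn (k + 1) n)
            ≤ oldbdFn (k + 1) (avoidFn (k + 1) (m + n)) := oldbdFn_mono' (k + 1) _ _ h1
        omega
    intro m n
    exact fsup (m + n) m n le_rfl

/-! ### Admissible representations -/

def natSum (a : ℕ → ℕ) (s K : ℕ) : ℕ := ∑ i ∈ Finset.range (s + 1), (a i).choose (K - i)

lemma natSum_shift (a : ℕ → ℕ) (s K : ℕ) :
    natSum a (s + 1) (K + 1) = (a 0).choose (K + 1) + natSum (fun i => a (i + 1)) s K := by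
  unfold natSum
  rw [Finset.sum_range_succ']
  have e : ∑ i ∈ Finset.range (s + 1), (a (i + 1)).choose (K + 1 - (i + 1))
      = ∑ i ∈ Finset.range (s + 1), (a (i + 1)).choose (K - i) :=
    Finset.sum_congr rfl (fun i _ => by congr 1; omega)
  rw [e]
  exact Nat.add_comm _ _

lemma adm_succ {k s : ℕ} {a : ℕ → ℕ} (h : Admissible (k + 1) (s + 1) a) :
    Admissible k s (fun i => a (i + 1)) := by
  obtain ⟨h1, h2, h3⟩ := h
  refine ⟨by omega, fun i hi => h2 (i + 1) (by omega), ?_⟩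
  show k - s ≤ a (s + 1)
  have h4 : k + 1 - (s + 1) ≤ a (s + 1) := h3
  omega

lemma adm_head : ∀ s k (a : ℕ → ℕ), Admissible (k + 1) s a → k + 1 ≤ a 0 := by
  intro s
  induction s with
  | zero =>
    intro k a h
    have h3 : k + 1 - 0 ≤ a 0 := h.2.2
    omega
  | succ s ih =>
    intro k a h
    have hk : s + 1 ≤ k := by
      have := h.1
      omega
    obtain ⟨k', rfl⟩ : ∃ k', k = k' + 1 := ⟨k - 1, by omega⟩
    have h2 : k' + 1 ≤ a 1 := ih k' (fun i => a (i + 1)) (adm_succ h)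
    have h3 : a 1 < a 0 := h.2.1 0 (by omega)
    omega

lemma natSum_lt : ∀ s k (a : ℕ → ℕ), Admissible (k + 1) s a →
    natSum a s (k + 1) < (a 0 + 1).choose (k + 1) := by
  intro s
  induction s with
  | zero =>
    intro k a h
    have h0 : k + 1 ≤ a 0 := adm_head 0 k a h
    have e : natSum a 0 (k + 1) = (a 0).choose (k + 1) := by
      unfold natSum
      simp
    rw [e]
    exact choose_lt_choose_succ (by omega)
  | succ s ih =>
    intro k a h
    obtain ⟨k', rfl⟩ : ∃ k', k = k' + 1 := ⟨k - 1, by have := h.1; omega⟩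
    have ha' := adm_succ h
    have h1 : natSum (fun i => a (i + 1)) s (k' + 1) < (a 1 + 1).choose (k' + 1) :=
      ih k' _ ha'
    have h2 : a 1 + 1 ≤ a 0 := h.2.1 0 (by omega)
    have h3 : (a 1 + 1).choose (k' + 1) ≤ (a 0).choose (k' + 1) := Nat.choose_le_choose _ h2
    have h4 : natSum a (s + 1) (k' + 1 + 1)
        = (a 0).choose (k' + 1 + 1) + natSum (fun i => a (i + 1)) s (k' + 1) :=
      natSum_shift a s (k' + 1)
    have h5 : (a 0 + 1).choose (k' + 1 + 1) = (a 0).choose (k' + 1) + (a 0).choose (k' + 1 + 1) :=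
      pascal_succ (a 0) (k' + 1)
    show natSum a (s + 1) (k' + 1 + 1) < (a 0 + 1).choose (k' + 1 + 1)
    omega

lemma greedy : ∀ s k (a : ℕ → ℕ), Admissible (k + 1) s a →
    oldbdFn (k + 1) (natSum a s (k + 1)) = natSum a s (k + 2) := by
  intro s
  induction s with
  | zero =>
    intro k a h
    have h0 : k + 1 ≤ a 0 := adm_head 0 k a h
    have e1 : natSum a 0 (k + 1) = (a 0).choose (k + 1) := by unfold natSum; simp
    have e2 : natSum a 0 (k + 2) = (a 0).choose (k + 2) := by unfold natSum; simp
    rw [e1, e2, oldbdFn_full k (a 0) h0]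
  | succ s ih =>
    intro k a h
    obtain ⟨k', rfl⟩ : ∃ k', k = k' + 1 := ⟨k - 1, by have := h.1; omega⟩
    have ha' := adm_succ h
    have hhead : k' + 2 ≤ a 0 := by
      have := adm_head (s + 1) (k' + 1) a h
      omega
    have h1 : natSum (fun i => a (i + 1)) s (k' + 1) < (a 1 + 1).choose (k' + 1) :=
      natSum_lt s k' _ ha'
    have h2 : a 1 + 1 ≤ a 0 := h.2.1 0 (by omega)
    have hT : natSum (fun i => a (i + 1)) s (k' + 1) < (a 0).choose (k' + 1) :=
      lt_of_lt_of_le h1 (Nat.choose_le_choose _ h2)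
    have h4 : natSum a (s + 1) (k' + 1 + 1)
        = (a 0).choose (k' + 1 + 1) + natSum (fun i => a (i + 1)) s (k' + 1) :=
      natSum_shift a s (k' + 1)
    have h5 : natSum a (s + 1) (k' + 1 + 2)
        = (a 0).choose (k' + 1 + 2) + natSum (fun i => a (i + 1)) s (k' + 2) :=
      natSum_shift a s (k' + 2)
    have hblock : oldbdFn (k' + 1 + 1)
          ((a 0).choose (k' + 1 + 1) + natSum (fun i => a (i + 1)) s (k' + 1))
        = (a 0).choose (k' + 1 + 2) + oldbdFn (k' + 1) (natSum (fun i => a (i + 1)) s (k' + 1)) :=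
      oldbdFn_block (k' + 1) (a 0) _ hhead hT
    have hih : oldbdFn (k' + 1) (natSum (fun i => a (i + 1)) s (k' + 1))
        = natSum (fun i => a (i + 1)) s (k' + 2) := ih k' _ ha'
    rw [h4, hblock, hih, h5]

lemma cSumZ_eq (a : ℕ → ℕ) (s k : ℕ) (h : s ≤ k) : cSumZ a s (k : ℤ) = natSum a s k := by
  unfold cSumZ natSum
  apply Finset.sum_congr rfl
  intro i hi
  simp only [Finset.mem_range] at hi
  simp only [chooseZ]
  rw [if_pos (show (0 : ℤ) ≤ (k : ℤ) - (i : ℕ) by omega)]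
  congr 1
  omega

lemma cSumZ_eq' (a : ℕ → ℕ) (s k : ℕ) (h : s ≤ k) :
    cSumZ a s ((k : ℤ) + 1) = natSum a s (k + 1) := by
  unfold cSumZ natSum
  apply Finset.sum_congr rfl
  intro i hi
  simp only [Finset.mem_range] at hi
  simp only [chooseZ]
  rw [if_pos (show (0 : ℤ) ≤ (k : ℤ) + 1 - (i : ℕ) by omega)]
  congr 1
  omega

end DU

/-- Lemma (disjoint union): for `k > 0` and sequences admissible for `k`, if
`Σ C(c_{k-i}, k-i) = Σ C(a_{k-i}, k-i) + Σ C(b_{k-i}, k-i)` then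
`Σ C(c_{k-i}, k+1-i) ≥ Σ C(a_{k-i}, k+1-i) + Σ C(b_{k-i}, k+1-i)`; equivalently,
`oldbd_k` is superadditive: `oldbd_k(m+n) ≥ oldbd_k(m) + oldbd_k(n)`. -/
theorem disjoint_union_superadditive :
    (∀ (k s t u : ℕ) (a b c : ℕ → ℕ), 0 < k →
      Admissible k s a → Admissible k t b → Admissible k u c →
      cSumZ c u (k : ℤ) = cSumZ a s (k : ℤ) + cSumZ b t (k : ℤ) →
      cSumZ a s ((k : ℤ) + 1) + cSumZ b t ((k : ℤ) + 1) ≤ cSumZ c u ((k : ℤ) + 1)) ∧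
    (∀ (k m n : ℕ), 0 < k → 0 < m → 0 < n →
      oldbdFn k m + oldbdFn k n ≤ oldbdFn k (m + n)) := by
  constructor
  · intro k s t u a b c hk ha hb hc hsum
    obtain ⟨k', rfl⟩ : ∃ k', k = k' + 1 := ⟨k - 1, by omega⟩
    rw [DU.cSumZ_eq c u (k' + 1) (by have := hc.1; omega),
      DU.cSumZ_eq a s (k' + 1) (by have := ha.1; omega),
      DU.cSumZ_eq b t (k' + 1) (by have := hb.1; omega)] at hsum
    rw [DU.cSumZ_eq' a s (k' + 1) (by have := ha.1; omega),
      DU.cSumZ_eq' b t (k' + 1) (by have := hb.1; omega),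
      DU.cSumZ_eq' c u (k' + 1) (by have := hc.1; omega)]
    have h1 : oldbdFn (k' + 1) (DU.natSum c u (k' + 1)) = DU.natSum c u (k' + 1 + 1) :=
      DU.greedy u k' c hc
    have h2 : oldbdFn (k' + 1) (DU.natSum a s (k' + 1)) = DU.natSum a s (k' + 1 + 1) :=
      DU.greedy s k' a ha
    have h3 : oldbdFn (k' + 1) (DU.natSum b t (k' + 1)) = DU.natSum b t (k' + 1 + 1) :=
      DU.greedy t k' b hb
    have h4 := DU.superadd (k' + 1) (DU.natSum a s (k' + 1)) (DU.natSum b t (k' + 1))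
    rw [← hsum] at h4
    omega
  · intro k m n _ _ _
    exact DU.superadd k m n
end

section
/- Let k > 1 and let (a_k, …, a_{k-s}), (b_k, …, b_{k-t}), (c_k, …, c_{k-u}) be integer sequences admissible for k. If Σ_{i=0}^{s} C(a_{k-i}, k-i) ≥ Σ_{i=0}^{t} C(b_{k-i}, k-i) and Σ_{i=0}^{u} C(c_{k-i}, k-i) = Σ_{i=0}^{s} C(a_{k-i}, k-i) + Σ_{i=0}^{t} C(b_{k-i}, k-1-i), then Σ_{i=0}^{u} C(c_{k-i}, k+1-i) ≥ Σ_{i=0}^{s} C(a_{k-i}, k+1-i) + Σ_{i=0}^{t} C(b_{k-i}, k-i). -/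
/-!
The cascade sums `Σ C(a_{k-i}, j-i)` are the sizes of colex initial segments `𝒜` of `k`-sets
(`j = k`), bound the size of their shadows (`j = k - 1`), and count the `(k+1)`-sets all of
whose facets lie in `𝒜` (`j = k + 1`). Let `ℬ ⊆ 𝒜` be the segments for `b` and `a`, and
attach to `𝒜` the cone over `∂ℬ` from a new vertex. The resulting family has at most `|𝒞|`
members, and its fillings contain those of `𝒜` together with the cone over `ℬ`. By
Kruskal–Katona, applied to complements, a colex initial segment has the most fillings among
families of `k`-sets of its size, so `𝒞` has at least `|fillings of 𝒜| + |ℬ|` of them.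
-/

open Finset Finset.Colex
open scoped FinsetFamily

namespace Finset

variable {α : Type*}

section Insert

variable [DecidableEq α] {a : α} {𝒮 : Finset (Finset α)}

lemma forall_mem_of_forall_mem_erase {T : Finset α} {p : α → Prop} (hT : 1 < #T)
    (h : ∀ y ∈ T, ∀ x ∈ T.erase y, p x) : ∀ x ∈ T, p x := by
  intro x hx
  obtain ⟨y, hy, hyx⟩ := exists_mem_ne hT x
  exact h y hy x (mem_erase.2 ⟨hyx.symm, hx⟩)

lemma injOn_insert (h : ∀ T ∈ 𝒮, a ∉ T) : Set.InjOn (insert a) (𝒮 : Set (Finset α)) :=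
  fun S hS T hT hST => by rw [← erase_insert (h S hS), hST, erase_insert (h T hT)]

end Insert

section Filling

variable [DecidableEq α] [Fintype α] {j : ℕ} {𝒮 𝒯 : Finset (Finset α)} {T : Finset α}

def filling (j : ℕ) (𝒮 : Finset (Finset α)) : Finset (Finset α) :=
  {T ∈ powersetCard (j + 1) univ | ∀ x ∈ T, T.erase x ∈ 𝒮}

lemma mem_filling : T ∈ filling j 𝒮 ↔ #T = j + 1 ∧ ∀ x ∈ T, T.erase x ∈ 𝒮 := by
  simp [filling]

lemma filling_mono (h : 𝒮 ⊆ 𝒯) : filling j 𝒮 ⊆ filling j 𝒯 := fun _ hT =>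
  mem_filling.2 ⟨(mem_filling.1 hT).1, fun x hx => h ((mem_filling.1 hT).2 x hx)⟩

lemma filling_eq_sdiff_upShadow (𝒮 : Finset (Finset α)) :
    filling j 𝒮 = powersetCard (j + 1) univ \ ∂⁺ (powersetCard j univ \ 𝒮) := by
  ext T
  simp only [mem_filling, mem_sdiff, mem_powersetCard_univ, mem_upShadow_iff_erase_mem,
    not_exists, not_and, not_not, and_congr_right_iff]
  intro hT
  refine forall₂_congr fun x hx => ?_
  simp [card_erase_of_mem hx, hT]

lemma filling_powersetCard (s : Finset α) (hj : 1 ≤ j) :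
    filling j (powersetCard j s) = powersetCard (j + 1) s := by
  ext T
  simp only [mem_filling, mem_powersetCard]
  constructor
  · rintro ⟨hT, h⟩
    exact ⟨forall_mem_of_forall_mem_erase (by omega) fun y hy => (h y hy).1, hT⟩
  · rintro ⟨hTs, hT⟩
    exact ⟨hT, fun x hx => ⟨(erase_subset x T).trans hTs, by simp [card_erase_of_mem hx, hT]⟩⟩

end Filling

lemma notMem_of_forall_lt [Preorder α] {a : α} {T : Finset α} (hT : ∀ x ∈ T, x < a) : a ∉ T :=
  fun ha => lt_irrefl a (hT a ha)

lemma shadow_powersetCard_subset [DecidableEq α] {j : ℕ} (s : Finset α) :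
    ∂ (powersetCard j s) ⊆ powersetCard (j - 1) s := by
  intro T hT
  obtain ⟨S, hS, x, hx, rfl⟩ := mem_shadow_iff.1 hT
  rw [mem_powersetCard] at hS ⊢
  exact ⟨(erase_subset x S).trans hS.1, by rw [card_erase_of_mem hx, hS.2]⟩

section Step

variable [LinearOrder α] [LocallyFiniteOrderBot α] {j : ℕ} {a : α} {𝒮 : Finset (Finset α)}

lemma card_powersetCard_Iio_union_image_insert (h𝒮 : ∀ T ∈ 𝒮, ∀ x ∈ T, x < a) :
    #(powersetCard j (Iio a) ∪ 𝒮.image (insert a)) = (#(Iio a)).choose j + #𝒮 := by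
  have hdisj : Disjoint (powersetCard j (Iio a)) (𝒮.image (insert a)) := by
    simp only [disjoint_left, mem_powersetCard, mem_image, not_exists, not_and]
    rintro _ ⟨hTa, -⟩ T - rfl
    exact lt_irrefl a (mem_Iio.1 (hTa (mem_insert_self a T)))
  rw [card_union_of_disjoint hdisj, card_powersetCard,
    card_image_of_injOn (injOn_insert fun T hT => notMem_of_forall_lt (h𝒮 T hT))]

lemma isInitSeg_powersetCard_Iio : IsInitSeg (powersetCard j (Iio a)) j := by
  refine ⟨fun T hT => (mem_powersetCard.1 hT).2, fun S T hS ⟨hTS, hT⟩ => ?_⟩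
  rw [mem_powersetCard] at hS ⊢
  refine ⟨fun x hx => mem_Iio.2 ?_, hT⟩
  exact forall_lt_mono hTS.le (fun y hy => mem_Iio.1 (hS.1 hy)) x hx

lemma IsInitSeg.powersetCard_Iio_union_image_insert (h : IsInitSeg 𝒮 (j - 1))
    (h𝒮 : ∀ T ∈ 𝒮, ∀ x ∈ T, x < a) (hj : 1 ≤ j) :
    IsInitSeg (powersetCard j (Iio a) ∪ 𝒮.image (insert a)) j := by
  have hsized : ∀ T ∈ 𝒮, #(insert a T) = j := fun T hT => by
    rw [card_insert_of_notMem (notMem_of_forall_lt (h𝒮 T hT)), h.1 hT]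
    omega
  refine ⟨?_, fun S T hS ⟨hTS, hT⟩ => ?_⟩
  · intro T hT
    obtain hT | hT := mem_union.1 (mem_coe.1 hT)
    · exact (mem_powersetCard.1 hT).2
    · obtain ⟨R, hR, rfl⟩ := mem_image.1 hT
      exact hsized R hR
  have hSa : ∀ x ∈ S, x ≤ a := by
    obtain hS | hS := mem_union.1 hS
    · exact fun x hx => (mem_Iio.1 ((mem_powersetCard.1 hS).1 hx)).le
    · obtain ⟨R, hR, rfl⟩ := mem_image.1 hS
      exact forall_mem_insert _ _ _ |>.2 ⟨le_rfl, fun x hx => (h𝒮 R hR x hx).le⟩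
  by_cases haT : a ∈ T
  · obtain hS | hS := mem_union.1 hS
    · exact absurd (forall_lt_mono hTS.le (fun y hy => mem_Iio.1 ((mem_powersetCard.1 hS).1 hy))
        a haT) (lt_irrefl a)
    obtain ⟨R, hR, rfl⟩ := mem_image.1 hS
    have hlt : toColex (T.erase a) < toColex R := by
      have := (toColex_sdiff_lt_toColex_sdiff (singleton_subset_iff.2 haT)
        (singleton_subset_iff.2 (mem_insert_self a R))).2 hTS
      rwa [sdiff_singleton_eq_erase, sdiff_singleton_eq_erase,
        erase_insert (notMem_of_forall_lt (h𝒮 R hR))] at this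
    refine mem_union_right _ (mem_image.2 ⟨T.erase a, h.2 hR ⟨hlt, ?_⟩, insert_erase haT⟩)
    rw [card_erase_of_mem haT, hT]
  · refine mem_union_left _ (mem_powersetCard.2 ⟨fun x hx => mem_Iio.2 ?_, hT⟩)
    exact (forall_le_mono hTS.le hSa x hx).lt_of_ne fun hxa => haT (hxa ▸ hx)

lemma shadow_powersetCard_Iio_union_image_insert_subset
    (hsized : (𝒮 : Set (Finset α)).Sized (j - 1)) (h𝒮 : ∀ T ∈ 𝒮, ∀ x ∈ T, x < a) :
    ∂ (powersetCard j (Iio a) ∪ 𝒮.image (insert a)) ⊆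
      powersetCard (j - 1) (Iio a) ∪ (∂ 𝒮).image (insert a) := by
  intro T hT
  obtain ⟨_, hS, x, hx, rfl⟩ := mem_shadow_iff.1 hT
  obtain hS | hS := mem_union.1 hS
  · exact mem_union_left _ (shadow_powersetCard_subset _ (erase_mem_shadow hS hx))
  obtain ⟨R, hR, rfl⟩ := mem_image.1 hS
  have haR := notMem_of_forall_lt (h𝒮 R hR)
  obtain rfl | hxa := eq_or_ne x a
  · rw [erase_insert haR]
    exact mem_union_left _ (mem_powersetCard.2 ⟨fun y hy => mem_Iio.2 (h𝒮 R hR y hy), hsized hR⟩)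
  · rw [erase_insert_of_ne hxa.symm]
    refine mem_union_right _ (mem_image_of_mem _ (erase_mem_shadow hR ?_))
    exact mem_of_mem_insert_of_ne hx hxa

lemma filling_powersetCard_Iio_union_image_insert [Fintype α] (h𝒮 : ∀ T ∈ 𝒮, ∀ x ∈ T, x < a)
    (hj : 2 ≤ j) :
    filling j (powersetCard j (Iio a) ∪ 𝒮.image (insert a)) =
      powersetCard (j + 1) (Iio a) ∪ (filling (j - 1) 𝒮).image (insert a) := by
  ext T
  rw [mem_filling, mem_union, mem_powersetCard, mem_image]
  constructor
  · rintro ⟨hT, h⟩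
    by_cases haT : a ∈ T
    · refine Or.inr ⟨T.erase a, mem_filling.2 ⟨?_, fun x hx => ?_⟩, insert_erase haT⟩
      · rw [card_erase_of_mem haT, hT]
        omega
      obtain ⟨hxa, hxT⟩ := mem_erase.1 hx
      obtain hP | hI := mem_union.1 (h x hxT)
      · exact absurd ((mem_powersetCard.1 hP).1 (mem_erase.2 ⟨hxa.symm, haT⟩)) (by simp)
      · obtain ⟨R, hR, hRT⟩ := mem_image.1 hI
        rwa [erase_right_comm, ← hRT, erase_insert (notMem_of_forall_lt (h𝒮 R hR))]
    · refine Or.inl ⟨fun x hx => mem_Iio.2 ?_, hT⟩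
      refine forall_mem_of_forall_mem_erase (p := (· < a)) (by omega) (fun y hy z hz => ?_) x hx
      obtain hP | hI := mem_union.1 (h y hy)
      · exact mem_Iio.1 ((mem_powersetCard.1 hP).1 hz)
      · obtain ⟨R, -, hRT⟩ := mem_image.1 hI
        exact absurd (mem_of_mem_erase (hRT ▸ mem_insert_self a R)) haT
  · rintro (⟨hTa, hT⟩ | ⟨R, hR, rfl⟩)
    · refine ⟨hT, fun x hx => mem_union_left _ (mem_powersetCard.2 ⟨?_, ?_⟩)⟩
      · exact (erase_subset x T).trans hTa
      · simp [card_erase_of_mem hx, hT]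
    obtain ⟨hRcard, hRf⟩ := mem_filling.1 hR
    have hRa : ∀ x ∈ R, x < a :=
      forall_mem_of_forall_mem_erase (by omega) fun y hy => h𝒮 _ (hRf y hy)
    have haR := notMem_of_forall_lt hRa
    refine ⟨by rw [card_insert_of_notMem haR, hRcard]; omega, fun x hx => ?_⟩
    obtain rfl | hxa := eq_or_ne x a
    · rw [erase_insert haR]
      exact mem_union_left _ (mem_powersetCard.2 ⟨fun y hy => mem_Iio.2 (hRa y hy), by omega⟩)
    · rw [erase_insert_of_ne hxa.symm]
      exact mem_union_right _ (mem_image_of_mem _ (hRf x (mem_of_mem_insert_of_ne hx hxa)))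

end Step

section Cascade

variable [LinearOrder α] [LocallyFiniteOrderBot α]

/-- For `d 0 > d 1 > ⋯ > d r` this is the colex initial segment of `j`-sets whose size has the
cascade representation `∑ i ≤ r, C(#(Iio (d i)), j - i)`. -/
def cascade : ℕ → ℕ → (ℕ → α) → Finset (Finset α)
  | 0, j, d => powersetCard j (Iio (d 0))
  | r + 1, j, d =>
    powersetCard j (Iio (d 0)) ∪ (cascade r (j - 1) fun i => d (i + 1)).image (insert (d 0))

variable {r j : ℕ} {d : ℕ → α}

lemma forall_le_of_mem_cascade (hd : ∀ i < r, d (i + 1) < d i) :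
    ∀ T ∈ cascade r j d, ∀ x ∈ T, x ≤ d 0 := by
  induction r generalizing j d with
  | zero => exact fun T hT x hx => (mem_Iio.1 ((mem_powersetCard.1 hT).1 hx)).le
  | succ r ih =>
    intro T hT x hx
    obtain hT | hT := mem_union.1 hT
    · exact (mem_Iio.1 ((mem_powersetCard.1 hT).1 hx)).le
    obtain ⟨R, hR, rfl⟩ := mem_image.1 hT
    obtain rfl | hx := mem_insert.1 hx
    · exact le_rfl
    · exact (ih (fun i hi => hd (i + 1) (by omega)) R hR x hx).trans (hd 0 (by omega)).le

lemma forall_lt_of_mem_cascade_tail (hd : ∀ i < r + 1, d (i + 1) < d i) :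
    ∀ T ∈ cascade r j (fun i => d (i + 1)), ∀ x ∈ T, x < d 0 := fun T hT x hx =>
  (forall_le_of_mem_cascade (fun i hi => hd (i + 1) (by omega)) T hT x hx).trans_lt
    (hd 0 (by omega))

lemma card_cascade (hd : ∀ i < r, d (i + 1) < d i) :
    #(cascade r j d) = ∑ i ∈ range (r + 1), (#(Iio (d i))).choose (j - i) := by
  induction r generalizing j d with
  | zero => simp [cascade]
  | succ r ih =>
    rw [cascade, card_powersetCard_Iio_union_image_insert (forall_lt_of_mem_cascade_tail hd),
      ih (fun i hi => hd (i + 1) (by omega)), sum_range_succ' _ (r + 1), add_comm]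
    simp [Nat.sub_sub, add_comm]

lemma isInitSeg_cascade (hd : ∀ i < r, d (i + 1) < d i) (hr : r ≤ j) :
    IsInitSeg (cascade r j d) j := by
  induction r generalizing j d with
  | zero => exact isInitSeg_powersetCard_Iio
  | succ r ih =>
    exact IsInitSeg.powersetCard_Iio_union_image_insert
      (ih (fun i hi => hd (i + 1) (by omega)) (by omega)) (forall_lt_of_mem_cascade_tail hd)
      (by omega)

lemma shadow_cascade_subset (hd : ∀ i < r, d (i + 1) < d i) (hr : r ≤ j) :
    ∂ (cascade r j d) ⊆ cascade r (j - 1) d := by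
  induction r generalizing j d with
  | zero => exact shadow_powersetCard_subset _
  | succ r ih =>
    have hd' : ∀ i < r, d (i + 1 + 1) < d (i + 1) := fun i hi => hd (i + 1) (by omega)
    exact (shadow_powersetCard_Iio_union_image_insert_subset (isInitSeg_cascade hd' (by omega)).1
      (forall_lt_of_mem_cascade_tail hd)).trans
      (union_subset_union subset_rfl (image_subset_image (ih hd' (by omega))))

lemma filling_cascade [Fintype α] (hd : ∀ i < r, d (i + 1) < d i) (hr : r + 1 ≤ j) :
    filling j (cascade r j d) = cascade r (j + 1) d := by
  induction r generalizing j d with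
  | zero => exact filling_powersetCard _ (by omega)
  | succ r ih =>
    rw [cascade, filling_powersetCard_Iio_union_image_insert (forall_lt_of_mem_cascade_tail hd)
      (by omega), ih (fun i hi => hd (i + 1) (by omega)) (by omega), Nat.sub_add_cancel (by omega)]
    rfl

end Cascade

lemma Colex.IsInitSeg.subset_of_card_le [LinearOrder α] {r : ℕ} {𝒜 ℬ : Finset (Finset α)}
    (h𝒜 : IsInitSeg 𝒜 r) (hℬ : IsInitSeg ℬ r) (h : #ℬ ≤ #𝒜) : ℬ ⊆ 𝒜 :=
  (hℬ.total h𝒜).elim id fun h𝒜ℬ => (eq_of_subset_of_card_le h𝒜ℬ h).ge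

section KruskalKatona

variable [LinearOrder α] [Fintype α] {j : ℕ} {s t : Finset α}

lemma Colex.toColex_compl_lt_toColex_compl :
    toColex sᶜ < toColex tᶜ ↔ toColex t < toColex s := by
  simp only [toColex_lt_toColex_iff_exists_forall_lt, mem_compl, not_not]
  constructor <;> rintro ⟨x, h₁, h₂, h₃⟩ <;> exact ⟨x, h₂, h₁, fun y hy hy' => h₃ y hy' hy⟩

lemma Colex.IsInitSeg.compls_powersetCard_sdiff {𝒞 : Finset (Finset α)} (h : IsInitSeg 𝒞 j)
    (hj : j ≤ Fintype.card α) :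
    IsInitSeg (powersetCard j univ \ 𝒞)ᶜˢ (Fintype.card α - j) := by
  refine ⟨Set.Sized.compls fun S hS => mem_powersetCard_univ.1 (mem_sdiff.1 hS).1, ?_⟩
  rintro S T hS ⟨hTS, hT⟩
  rw [mem_compls, mem_sdiff, mem_powersetCard_univ] at hS ⊢
  refine ⟨by rw [card_compl, hT]; omega, fun hTc => hS.2 (h.2 hTc ⟨?_, hS.1⟩)⟩
  exact Colex.toColex_compl_lt_toColex_compl.2 hTS

end KruskalKatona

lemma card_filling_le_of_isInitSeg {n j : ℕ} {𝒢 𝒞 : Finset (Finset (Fin n))} (hj : j ≤ n)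
    (h𝒢 : (𝒢 : Set (Finset (Fin n))).Sized j) (h𝒞 : IsInitSeg 𝒞 j) (hcard : #𝒢 ≤ #𝒞) :
    #(filling j 𝒢) ≤ #(filling j 𝒞) := by
  set X := powersetCard j (univ : Finset (Fin n))
  have hX𝒢 : 𝒢 ⊆ X := fun S hS => mem_powersetCard_univ.2 (h𝒢 hS)
  have hX𝒞 : 𝒞 ⊆ X := fun S hS => mem_powersetCard_univ.2 (h𝒞.1 hS)
  have hsized : ∀ 𝒳, ((X \ 𝒳 : Finset (Finset (Fin n))) : Set (Finset (Fin n))).Sized j :=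
    fun 𝒳 S hS => mem_powersetCard_univ.1 (mem_sdiff.1 hS).1
  have hup : ∀ 𝒳, ∂⁺ (X \ 𝒳) ⊆ powersetCard (j + 1) univ := fun 𝒳 _ hT =>
    mem_powersetCard_univ.2 ((hsized 𝒳).upShadow hT)
  -- Complementation turns upper shadows into shadows, where Kruskal–Katona applies.
  have hkk : #(∂⁺ (X \ 𝒞)) ≤ #(∂⁺ (X \ 𝒢)) := by
    simpa only [shadow_compls, card_compls] using kruskal_katona (hsized 𝒢).compls
      (by rw [card_compls, card_compls, card_sdiff_of_subset hX𝒞, card_sdiff_of_subset hX𝒢]; omega)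
      (h𝒞.compls_powersetCard_sdiff (by simpa using hj))
  rw [filling_eq_sdiff_upShadow, filling_eq_sdiff_upShadow, card_sdiff_of_subset (hup _),
    card_sdiff_of_subset (hup _)]
  omega

section Cone

variable [DecidableEq α] {j : ℕ} {a : α} {𝒜 ℬ : Finset (Finset α)}

lemma sized_union_image_insert_shadow (h𝒜 : (𝒜 : Set (Finset α)).Sized j)
    (ha : ∀ T ∈ 𝒜, a ∉ T) (hℬ : ℬ ⊆ 𝒜) (hj : 1 ≤ j) :
    ((𝒜 ∪ (∂ ℬ).image (insert a) : Finset (Finset α)) : Set (Finset α)).Sized j := by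
  intro T hT
  obtain hT | hT := mem_union.1 (mem_coe.1 hT)
  · exact h𝒜 hT
  obtain ⟨_, hR, rfl⟩ := mem_image.1 hT
  obtain ⟨S, hS, x, hx, rfl⟩ := mem_shadow_iff.1 hR
  rw [card_insert_of_notMem fun h => ha S (hℬ hS) (mem_of_mem_erase h), card_erase_of_mem hx,
    h𝒜 (hℬ hS)]
  omega

lemma card_filling_add_card_le [Fintype α] (h𝒜 : (𝒜 : Set (Finset α)).Sized j)
    (ha : ∀ T ∈ 𝒜, a ∉ T) (hℬ : ℬ ⊆ 𝒜) (hj : 1 ≤ j) :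
    #(filling j 𝒜) + #ℬ ≤ #(filling j (𝒜 ∪ (∂ ℬ).image (insert a))) := by
  have haℬ : ∀ T ∈ ℬ, a ∉ T := fun T hT => ha T (hℬ hT)
  have hdisj : Disjoint (filling j 𝒜) (ℬ.image (insert a)) := by
    rw [disjoint_left]
    rintro T hT hT'
    obtain ⟨R, -, rfl⟩ := mem_image.1 hT'
    obtain ⟨hcard, hfacets⟩ := mem_filling.1 hT
    refine forall_mem_of_forall_mem_erase (p := (· ≠ a)) (by omega) (fun y hy x hx => ?_) a
      (mem_insert_self a R) rfl
    exact fun hxa => ha _ (hfacets y hy) (hxa ▸ hx)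
  have hcone : ℬ.image (insert a) ⊆ filling j (𝒜 ∪ (∂ ℬ).image (insert a)) := by
    intro T hT
    obtain ⟨R, hR, rfl⟩ := mem_image.1 hT
    refine mem_filling.2 ⟨by rw [card_insert_of_notMem (haℬ R hR), h𝒜 (hℬ hR)], fun x hx => ?_⟩
    obtain rfl | hxa := eq_or_ne x a
    · rw [erase_insert (haℬ R hR)]
      exact mem_union_left _ (hℬ hR)
    · rw [erase_insert_of_ne hxa.symm]
      exact mem_union_right _
        (mem_image_of_mem _ (erase_mem_shadow hR (mem_of_mem_insert_of_ne hx hxa)))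
  calc #(filling j 𝒜) + #ℬ = #(filling j 𝒜 ∪ ℬ.image (insert a)) := by
        rw [card_union_of_disjoint hdisj, card_image_of_injOn (injOn_insert haℬ)]
    _ ≤ _ := card_le_card (union_subset (filling_mono subset_union_left) hcone)

end Cone

end Finset

open Finset

lemma apply_le_apply_zero_of_forall_lt {β : Type*} [Preorder β] {s : ℕ} {a : ℕ → β}
    (ha : ∀ i < s, a (i + 1) < a i) : ∀ i ≤ s, a i ≤ a 0
  | 0, _ => le_rfl
  | i + 1, hi => (ha i (by omega)).le.trans (apply_le_apply_zero_of_forall_lt ha i (by omega))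

lemma cSumZ_eq_sum (a : ℕ → ℕ) {s j : ℕ} (h : s ≤ j) :
    cSumZ a s j = ∑ i ∈ range (s + 1), (a i).choose (j - i) := by
  refine sum_congr rfl fun i hi => ?_
  rw [mem_range] at hi
  rw [chooseZ, if_pos (by omega)]
  congr 1
  omega

lemma exists_isInitSeg_card_eq_cSumZ {k s N : ℕ} {a : ℕ → ℕ} (hs : s < k)
    (ha : ∀ i < s, a (i + 1) < a i) (hN : a 0 < N) :
    ∃ 𝒜 : Finset (Finset (Fin (N + 1))), Colex.IsInitSeg 𝒜 k ∧ (∀ T ∈ 𝒜, Fin.last N ∉ T) ∧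
      #𝒜 = cSumZ a s k ∧ #(∂ 𝒜) ≤ cSumZ a s (k - 1) ∧ #(filling k 𝒜) = cSumZ a s (k + 1) := by
  let d : ℕ → Fin (N + 1) := fun i => Fin.ofNat (N + 1) (a i)
  have hd_val : ∀ i ≤ s, (d i : ℕ) = a i := fun i hi =>
    Nat.mod_eq_of_lt (by have := apply_le_apply_zero_of_forall_lt ha i hi; omega)
  have hd : ∀ i < s, d (i + 1) < d i := fun i hi => by
    rw [Fin.lt_def, hd_val _ hi, hd_val _ hi.le]
    exact ha i hi
  have hcard : ∀ j : ℕ, s ≤ j → #(cascade s j d) = cSumZ a s j := fun j hj => by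
    rw [card_cascade hd, cSumZ_eq_sum a hj]
    refine sum_congr rfl fun i hi => ?_
    rw [Fin.card_Iio, hd_val i (by simpa [Nat.lt_succ_iff] using hi)]
  refine ⟨cascade s k d, isInitSeg_cascade hd hs.le, fun T hT hlast => ?_, hcard k hs.le, ?_, ?_⟩
  · have := forall_le_of_mem_cascade hd T hT _ hlast
    rw [Fin.le_iff_val_le_val, Fin.val_last, hd_val 0 (Nat.zero_le s)] at this
    omega
  · calc #(∂ (cascade s k d)) ≤ #(cascade s (k - 1) d) :=
          card_le_card (shadow_cascade_subset hd hs.le)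
      _ = cSumZ a s (k - 1) := by rw [hcard _ (by omega), Nat.cast_pred (by omega)]
  · rw [filling_cascade hd hs, hcard _ (by omega), Nat.cast_succ]

theorem link_subcomplex_general (k s t u : ℕ) (a b c : ℕ → ℕ)
    (ha : Admissible k s a) (hb : Admissible k t b) (hc : Admissible k u c)
    (hab : cSumZ b t (k : ℤ) ≤ cSumZ a s (k : ℤ))
    (heq : cSumZ c u (k : ℤ) = cSumZ a s (k : ℤ) + cSumZ b t ((k : ℤ) - 1)) :
    cSumZ a s ((k : ℤ) + 1) + cSumZ b t (k : ℤ) ≤ cSumZ c u ((k : ℤ) + 1) := by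
  obtain ⟨hs, ha, -⟩ := ha
  obtain ⟨ht, hb, -⟩ := hb
  obtain ⟨hu, hc, -⟩ := hc
  set N := a 0 + b 0 + c 0 + k
  obtain ⟨𝒜, h𝒜, h𝒜last, h𝒜card, -, h𝒜filling⟩ :=
    exists_isInitSeg_card_eq_cSumZ (N := N) hs ha (by omega)
  obtain ⟨ℬ, hℬ, -, hℬcard, hℬshadow, -⟩ := exists_isInitSeg_card_eq_cSumZ (N := N) ht hb (by omega)
  obtain ⟨𝒞, h𝒞, -, h𝒞card, -, h𝒞filling⟩ :=
    exists_isInitSeg_card_eq_cSumZ (N := N) hu hc (by omega)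
  have hℬ𝒜 : ℬ ⊆ 𝒜 := h𝒜.subset_of_card_le hℬ (by omega)
  set 𝒢 := 𝒜 ∪ (∂ ℬ).image (insert (Fin.last N))
  have h𝒢card : #𝒢 ≤ #𝒞 := calc
    #𝒢 ≤ #𝒜 + #(∂ ℬ) := (card_union_le _ _).trans (Nat.add_le_add_left card_image_le _)
    _ ≤ #𝒞 := by omega
  calc cSumZ a s (k + 1) + cSumZ b t k = #(filling k 𝒜) + #ℬ := by rw [h𝒜filling, hℬcard]
    _ ≤ #(filling k 𝒢) := card_filling_add_card_le h𝒜.1 h𝒜last hℬ𝒜 (by omega)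
    _ ≤ #(filling k 𝒞) := card_filling_le_of_isInitSeg (by omega)
        (sized_union_image_insert_shadow h𝒜.1 h𝒜last hℬ𝒜 (by omega)) h𝒞 h𝒢card
    _ = cSumZ c u (k + 1) := h𝒞filling

/-- Lemma (link subcomplex): for `k > 1` and sequences admissible for `k`, if
`Σ C(a_{k-i}, k-i) ≥ Σ C(b_{k-i}, k-i)` and
`Σ C(c_{k-i}, k-i) = Σ C(a_{k-i}, k-i) + Σ C(b_{k-i}, k-1-i)`, then
`Σ C(c_{k-i}, k+1-i) ≥ Σ C(a_{k-i}, k+1-i) + Σ C(b_{k-i}, k-i)`. -/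
theorem link_subcomplex (k s t u : ℕ) (a b c : ℕ → ℕ) (hk : 1 < k)
    (ha : Admissible k s a) (hb : Admissible k t b) (hc : Admissible k u c)
    (hab : cSumZ b t (k : ℤ) ≤ cSumZ a s (k : ℤ))
    (heq : cSumZ c u (k : ℤ) = cSumZ a s (k : ℤ) + cSumZ b t ((k : ℤ) - 1)) :
    cSumZ a s ((k : ℤ) + 1) + cSumZ b t (k : ℤ) ≤ cSumZ c u ((k : ℤ) + 1) :=
  link_subcomplex_general k s t u a b c ha hb hc hab heq
end

section
/- Let k > 0 and let (c_k, …, c_{k-u}), (a_k, …, a_{k-s}), (b_k, …, b_{k-t}) be integer sequences admissible for k with c_k ≤ a_k. If Σ_{i=0}^{u} C(c_{k-i}, k-i) + Σ_{i=0}^{s} C(a_{k-i}, k-i) = C(a_k + 1, k) + Σ_{i=0}^{t} C(b_{k-i}, k-i), then C(a_k + 1, k+1) + Σ_{i=0}^{t} C(b_{k-i}, k+1-i) > Σ_{i=0}^{u} C(c_{k-i}, k+1-i) + Σ_{i=0}^{s} C(a_{k-i}, k+1-i). -/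
/-!
Put `n = a_k + 1`. Inside the `k`-sets of an `n`-set, complementation turns the upper function
`N ↦ ∑ C(mᵢ, i + 1)` of a `k`-cascade into the Kruskal–Katona shadow function `∂` of order
`n - k`: `∑ C(mᵢ, i + 1) = C(n, k + 1) - ∂(C(n, k) - N)`. The hypothesis says that the
complements `X, Y` of the sums for `a` and `c` add up to the complement of the sum for `b`, so the
claim becomes the strict subadditivity `∂(X + Y) < ∂ X + ∂ Y` for `X, Y ≥ 1`. That inequality is
proved by induction on `X + Y` for all orders at once, together with companion inequalities for
the shadow and the upper function.
-/

namespace Cascade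

lemma succ_sub_le_choose {m r : ℕ} (hr : 1 ≤ r) (h : r ≤ m) : m + 1 - r ≤ m.choose r := by
  induction m with
  | zero => omega
  | succ m ih =>
    rcases Nat.eq_or_lt_of_le h with rfl | h
    · simp
    · have := Nat.choose_pos (n := m) (k := r - 1) (by omega)
      have := Nat.choose_succ_left m r hr
      have := ih (by omega)
      omega

lemma choose_lt_choose_succ {m r : ℕ} (hr : 1 ≤ r) (hm : r ≤ m) :
    m.choose r < (m + 1).choose r := by
  have := Nat.choose_pos (n := m) (k := r - 1) (by omega)
  have := Nat.choose_succ_left m r hr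
  omega

/-- The leading index of the `r`-cascade of `N`: the largest `m` with `C(m, r) ≤ N`. -/
def top (r N : ℕ) : ℕ := Nat.findGreatest (fun m => m.choose r ≤ N) (N + r)

section Top

variable {r M N m : ℕ}

lemma choose_top_le (hr : 1 ≤ r) : (top r N).choose r ≤ N :=
  Nat.findGreatest_spec (P := fun m => m.choose r ≤ N) (Nat.zero_le _)
    (by simp [Nat.choose_eq_zero_of_lt hr])

lemma lt_choose_top_succ (hr : 1 ≤ r) : N < (top r N + 1).choose r := by
  unfold top
  by_cases h : Nat.findGreatest (fun m => m.choose r ≤ N) (N + r) + 1 ≤ N + r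
  · simpa using Nat.findGreatest_is_greatest (Nat.lt_succ_self _) h
  · have := Nat.findGreatest_le (P := fun m => m.choose r ≤ N) (N + r)
    rw [show Nat.findGreatest (fun m => m.choose r ≤ N) (N + r) = N + r by omega]
    have := succ_sub_le_choose (m := N + r + 1) hr (by omega)
    omega

lemma top_eq (hr : 1 ≤ r) (h₁ : m.choose r ≤ N) (h₂ : N < (m + 1).choose r) : top r N = m := by
  have hm : m ≤ N + r := by
    by_cases hm : r ≤ m
    · have := succ_sub_le_choose hr hm; omega
    · omega
  have hle : m ≤ top r N := Nat.le_findGreatest hm h₁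
  have hge : top r N ≤ m := by
    by_contra! h
    have := Nat.choose_le_choose r (show m + 1 ≤ top r N from h)
    have := choose_top_le (N := N) hr
    omega
  omega

lemma le_top (hN : 1 ≤ N) : r ≤ top r N :=
  Nat.le_findGreatest (by omega) (by simpa using hN)

lemma top_mono (h : M ≤ N) : top r M ≤ top r N :=
  Nat.findGreatest_mono (fun _ hm => hm.trans h) (by omega)

end Top

/-- Applies `g` termwise to the greedy `r`-cascade `N = ∑ C(mᵢ, i)`, giving `∑ g mᵢ i`. -/
def map (g : ℕ → ℕ → ℕ) : ℕ → ℕ → ℕ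
  | 0, _ => 0
  | r + 1, N => if N = 0 then 0 else
      g (top (r + 1) N) (r + 1) + map g r (N - (top (r + 1) N).choose (r + 1))

section Map

variable {g : ℕ → ℕ → ℕ} {r m N : ℕ}

@[simp] lemma map_zero_left (g : ℕ → ℕ → ℕ) (N : ℕ) : map g 0 N = 0 := rfl

@[simp] lemma map_zero_right (g : ℕ → ℕ → ℕ) (r : ℕ) : map g r 0 = 0 := by
  cases r <;> simp [map]

lemma map_succ (hN : N ≠ 0) :
    map g (r + 1) N = g (top (r + 1) N) (r + 1) + map g r (N - (top (r + 1) N).choose (r + 1)) := by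
  simp [map, hN]

lemma map_eq (hr : 1 ≤ r) (hm : r ≤ m) (h₁ : m.choose r ≤ N) (h₂ : N < (m + 1).choose r) :
    map g r N = g m r + map g (r - 1) (N - m.choose r) := by
  obtain ⟨r, rfl⟩ : ∃ r', r = r' + 1 := ⟨r - 1, by omega⟩
  rw [map_succ (by have := Nat.choose_pos hm; omega), top_eq hr h₁ h₂, Nat.add_sub_cancel]

lemma map_choose (hr : 1 ≤ r) (hm : r ≤ m) : map g r (m.choose r) = g m r := by
  simp [map_eq hr hm le_rfl (choose_lt_choose_succ hr hm)]

lemma map_mono (hg : ∀ i, Monotone (g · i))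
    (hpascal : ∀ m i, 1 ≤ i → g m i + g m (i + 1) ≤ g (m + 1) (i + 1)) (r : ℕ) :
    Monotone (map g r) := by
  induction r with
  | zero => intro _ _ _; simp
  | succ r ih =>
    intro M N h
    rcases Nat.eq_zero_or_pos M with rfl | hM
    · simp
    rw [map_succ hM.ne', map_succ (show N ≠ 0 by omega)]
    set tM := top (r + 1) M
    set tN := top (r + 1) N
    have htMN : tM ≤ tN := top_mono h
    rcases htMN.eq_or_lt with heq | hlt
    · rw [← heq]
      exact Nat.add_le_add_left (ih (Nat.sub_le_sub_right h _)) _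
    rcases Nat.eq_zero_or_pos r with rfl | hr
    · simpa using hg 1 htMN
    have htail : map g r (M - tM.choose (r + 1)) ≤ g tM r := by
      have hrM : r + 1 ≤ tM := le_top hM
      have hMlt : M < (tM + 1).choose (r + 1) := lt_choose_top_succ (by omega)
      have := Nat.choose_succ_succ' tM r
      calc map g r (M - tM.choose (r + 1)) ≤ map g r (tM.choose r) := ih (by omega)
        _ = g tM r := map_choose hr (by omega)
    calc g tM (r + 1) + map g r (M - tM.choose (r + 1))
        ≤ g tM r + g tM (r + 1) := by omega
      _ ≤ g (tM + 1) (r + 1) := hpascal tM r hr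
      _ ≤ g tN (r + 1) := hg (r + 1) hlt
      _ ≤ g tN (r + 1) + map g r (N - tN.choose (r + 1)) := Nat.le_add_right _ _

end Map

def lift (j N : ℕ) : ℕ := map (fun m i => m.choose (i + 1)) j N

/-- By Kruskal–Katona, the least size of the shadow of a family of `N` sets of size `r`. -/
def shadow (r N : ℕ) : ℕ := map (fun m i => m.choose (i - 1)) r N

section LiftShadow

variable {j r m N : ℕ}

@[simp] lemma lift_zero_left (N : ℕ) : lift 0 N = 0 := rfl

@[simp] lemma shadow_zero_left (N : ℕ) : shadow 0 N = 0 := rfl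

@[simp] lemma lift_zero_right (j : ℕ) : lift j 0 = 0 := map_zero_right _ j

@[simp] lemma shadow_zero_right (r : ℕ) : shadow r 0 = 0 := map_zero_right _ r

lemma lift_eq (hj : 1 ≤ j) (hm : j ≤ m) (h₁ : m.choose j ≤ N) (h₂ : N < (m + 1).choose j) :
    lift j N = m.choose (j + 1) + lift (j - 1) (N - m.choose j) :=
  map_eq hj hm h₁ h₂

lemma shadow_eq (hr : 1 ≤ r) (hm : r ≤ m) (h₁ : m.choose r ≤ N) (h₂ : N < (m + 1).choose r) :
    shadow r N = m.choose (r - 1) + shadow (r - 1) (N - m.choose r) :=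
  map_eq hr hm h₁ h₂

lemma lift_eq_top (hj : 1 ≤ j) (hN : 1 ≤ N) :
    lift j N = (top j N).choose (j + 1) + lift (j - 1) (N - (top j N).choose j) :=
  lift_eq hj (le_top hN) (choose_top_le hj) (lt_choose_top_succ hj)

lemma shadow_eq_top (hr : 1 ≤ r) (hN : 1 ≤ N) :
    shadow r N = (top r N).choose (r - 1) + shadow (r - 1) (N - (top r N).choose r) :=
  shadow_eq hr (le_top hN) (choose_top_le hr) (lt_choose_top_succ hr)

lemma lift_choose (hj : 1 ≤ j) (hm : j ≤ m) : lift j (m.choose j) = m.choose (j + 1) :=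
  map_choose hj hm

lemma shadow_choose (hr : 1 ≤ r) (hm : r ≤ m) : shadow r (m.choose r) = m.choose (r - 1) :=
  map_choose hr hm

lemma shadow_one_right (hr : 1 ≤ r) : shadow r 1 = r := by
  simpa [Nat.choose_symm_of_eq_add (show r = r - 1 + 1 by omega)] using
    shadow_choose hr (le_refl r)

lemma shadow_one_left (hN : 1 ≤ N) : shadow 1 N = 1 := by
  simpa using shadow_choose le_rfl hN

lemma lift_one_left : lift 1 N = N.choose 2 := by
  rcases Nat.eq_zero_or_pos N with rfl | hN
  · simp
  · have := lift_choose (m := N) le_rfl hN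
    simpa using this

lemma lift_eq_zero_of_le (h : N ≤ j) : lift j N = 0 := by
  induction j generalizing N with
  | zero => rfl
  | succ j ih =>
    rcases Nat.eq_zero_or_pos N with rfl | hN
    · simp
    rw [lift_eq (m := j + 1) (by omega) le_rfl (by rw [Nat.choose_self]; exact hN)
      (by rw [Nat.choose_succ_self_right]; omega)]
    simpa using ih (by omega)

lemma lift_pred_self (hj : 2 ≤ j) : lift (j - 1) j = 1 := by
  have h := lift_choose (j := j - 1) (m := j) (by omega) (by omega)
  rwa [Nat.choose_symm_of_eq_add (show j = j - 1 + 1 by omega), Nat.choose_one_right,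
    Nat.sub_add_cancel (by omega), Nat.choose_self] at h

lemma lift_mono (j : ℕ) : Monotone (lift j) :=
  map_mono (fun i => Nat.choose_mono (i + 1)) (fun m i _ => (Nat.choose_succ_succ' m (i + 1)).ge) j

lemma shadow_mono (r : ℕ) : Monotone (shadow r) :=
  map_mono (fun i => Nat.choose_mono (i - 1))
    (fun m i hi => (Nat.choose_succ_left m i hi).ge) r

end LiftShadow

/-- Complementation inside `C(n, k)`: the `(k + 1)`-sets whose `k`-subsets all lie in an initial
segment are exactly those avoiding the shadow of the complementary final segment. -/
theorem lift_add_shadow_sub {n k C : ℕ} (hk : 1 ≤ k) (hkn : k < n) (hC : C ≤ n.choose k) :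
    lift k C + shadow (n - k) (n.choose k - C) = n.choose (k + 1) := by
  induction n using Nat.strong_induction_on generalizing k C with
  | _ n ih =>
  obtain ⟨n, rfl⟩ : ∃ n', n = n' + 1 := ⟨n - 1, by omega⟩
  have hpascal : (n + 1).choose (k + 1) = n.choose k + n.choose (k + 1) :=
    Nat.choose_succ_succ' n k
  have hpascal' : (n + 1).choose k = n.choose (k - 1) + n.choose k := Nat.choose_succ_left n k hk
  rcases hC.eq_or_lt with rfl | hClt
  · rw [Nat.sub_self, shadow_zero_right, lift_choose hk hkn.le, add_zero]
  -- Peel off a top cascade term: that of `C` if `C(n, k) ≤ C`, otherwise that of the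
  -- complement `C(n + 1, k) - C`, which is `C(n, n + 1 - k)`.
  by_cases htop : n.choose k ≤ C
  · rw [lift_eq hk (by omega) htop hClt]
    rcases (show k = 1 ∨ 2 ≤ k by omega) with rfl | hk2
    · rw [Nat.choose_one_right] at htop hClt
      obtain rfl : C = n := by omega
      rw [lift_zero_left, Nat.choose_one_right, Nat.add_sub_cancel_left, Nat.add_sub_cancel,
        shadow_one_right (by omega), Nat.choose_succ_succ' C 1, Nat.choose_one_right]
      omega
    · have h := ih n (by omega) (k := k - 1) (C := C - n.choose k) (by omega) (by omega) (by omega)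
      rw [show n - (k - 1) = n + 1 - k by omega, Nat.sub_add_cancel (by omega : 1 ≤ k),
        show n.choose (k - 1) - (C - n.choose k) = (n + 1).choose k - C by omega] at h
      omega
  push Not at htop
  rcases (show k = n ∨ k < n by omega) with rfl | hkn'
  · have hC0 : C = 0 := by simpa using htop
    subst hC0
    simp [shadow_one_left, show k + 1 - k = 1 by omega]
  have hsymm : n.choose (k - 1) = n.choose (n + 1 - k) :=
    Nat.choose_symm_of_eq_add (by omega)
  have hsymm' : n.choose (n + 1 - k - 1) = n.choose k := Nat.choose_symm_of_eq_add (by omega)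
  have hsymm'' : (n + 1).choose (n + 1 - k) = (n + 1).choose k := Nat.choose_symm hkn.le
  rcases Nat.eq_zero_or_pos C with rfl | hC0
  · rw [lift_zero_right, Nat.sub_zero, zero_add, ← hsymm'', shadow_choose (by omega) (by omega)]
    exact Nat.choose_symm_of_eq_add (by omega)
  rw [shadow_eq (r := n + 1 - k) (m := n) (by omega) (by omega) (by omega) (by omega),
    hsymm', show (n + 1).choose k - C - n.choose (n + 1 - k) = n.choose k - C by omega,
    show n + 1 - k - 1 = n - k by omega]
  have h := ih n (by omega) hk hkn' htop.le
  omega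

lemma choose_two_add_choose_two_le {U V : ℕ} (hU : 1 ≤ U) (hV : 1 ≤ V) :
    U.choose 2 + V.choose 2 ≤ (U + V - 1).choose 2 := by
  obtain ⟨U, rfl⟩ : ∃ U', U = U' + 1 := ⟨U - 1, by omega⟩
  obtain ⟨V, rfl⟩ : ∃ V', V = V' + 1 := ⟨V - 1, by omega⟩
  rw [show U + 1 + (V + 1) - 1 = U + V + 1 by omega]
  simp only [Nat.choose_two_right, Nat.add_sub_cancel]
  exact Nat.div_add_div_le_add_div.trans (Nat.div_le_div_right (by nlinarith))

lemma shadow_add_lift_sub {m r X : ℕ} (hr : 1 ≤ r) (hrm : r < m) (hX : X ≤ m.choose r) :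
    shadow r X + lift (m - r) (m.choose r - X) = m.choose (r - 1) := by
  have hsymm : m.choose (m - r) = m.choose r := Nat.choose_symm hrm.le
  have h := lift_add_shadow_sub (n := m) (k := m - r) (C := m.choose r - X) (by omega) (by omega)
    (by omega)
  rwa [Nat.sub_sub_self hrm.le, hsymm, Nat.sub_sub_self hX,
    Nat.choose_symm_of_eq_add (show m = m - r + 1 + (r - 1) by omega), add_comm] at h

/-! The strict subadditivity of `shadow` is proved by induction on the size of the arguments,
simultaneously with the companion inequalities below; `P μ` asserts `P` for arguments below `μ`. -/

def ShadowSubaddBelow (μ : ℕ) : Prop :=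
  ∀ r X Y, 1 ≤ r → 1 ≤ X → 1 ≤ Y → X + Y < μ → shadow r (X + Y) < shadow r X + shadow r Y

def ShadowChooseBelow (μ : ℕ) : Prop :=
  ∀ r m, 1 ≤ r → r ≤ m → m.choose r < μ → shadow (r - 1) (m.choose r) < m.choose (r - 1)

def ShadowPredBelow (μ : ℕ) : Prop :=
  ∀ r N, 1 ≤ r → 1 ≤ N → N < μ → shadow (r - 1) N < shadow r N

def LiftChooseBelow (μ : ℕ) : Prop :=
  ∀ j m, 2 ≤ j → j + 1 ≤ m → m.choose j < μ → m.choose (j + 1) ≤ lift (j - 1) (m.choose j - 1)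

def LiftPredBelow (μ : ℕ) : Prop :=
  ∀ j N, 2 ≤ j → 1 ≤ N → N < μ → lift j N ≤ lift (j - 1) (N - 1)

def LiftSuperaddBelow (μ : ℕ) : Prop :=
  ∀ j U V, 1 ≤ j → 1 ≤ U → 1 ≤ V → U + V - 1 < μ → lift j U + lift j V ≤ lift j (U + V - 1)

section Induction

variable {μ : ℕ}

/-- Strict subadditivity of `shadow (n - k)`, transported through complementation in `C(n, k)`. -/
lemma lift_add_lift_lt (hsub : ShadowSubaddBelow μ) {n k U V W : ℕ} (hk : 1 ≤ k) (hkn : k < n)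
    (hU : U < n.choose k) (hV : V < n.choose k) (hUVW : U + V = n.choose k + W)
    (hμ : n.choose k - W < μ) :
    lift k U + lift k V < n.choose (k + 1) + lift k W := by
  have hdU := lift_add_shadow_sub hk hkn hU.le
  have hdV := lift_add_shadow_sub hk hkn hV.le
  have hdW := lift_add_shadow_sub hk hkn (show W ≤ n.choose k by omega)
  have h := hsub (n - k) (n.choose k - U) (n.choose k - V) (by omega) (by omega) (by omega)
    (by omega)
  rw [show n.choose k - U + (n.choose k - V) = n.choose k - W by omega] at h
  omega

lemma shadow_add_lt_of_choose_le (hsub : ShadowSubaddBelow μ) (hpred : ShadowPredBelow μ)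
    {r m X Y : ℕ} (hr : 2 ≤ r) (hm : r ≤ m) (hX : m.choose r ≤ X) (hXY : X + Y < (m + 1).choose r)
    (hY : 1 ≤ Y) (hμ : X + Y ≤ μ) :
    shadow r (X + Y) < shadow r X + shadow r Y := by
  have hpos : 1 ≤ m.choose r := Nat.choose_pos hm
  rw [shadow_eq (by omega) hm hX (by omega), shadow_eq (by omega) hm (by omega) hXY]
  have hYpred := hpred r Y (by omega) hY (by omega)
  rcases Nat.eq_zero_or_pos (X - m.choose r) with h0 | hpos'
  · rw [h0, show X + Y - m.choose r = Y by omega, shadow_zero_right]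
    omega
  · have h := hsub (r - 1) (X - m.choose r) Y (by omega) hpos' hY (by omega)
    rw [show X - m.choose r + Y = X + Y - m.choose r by omega] at h
    omega

lemma shadow_add_lt_of_lt_choose (hpred : ShadowPredBelow μ) (hsup : LiftSuperaddBelow μ)
    {r m X Y : ℕ} (hr : 1 ≤ r) (hm : r ≤ m) (hX : 1 ≤ X) (hXm : X < m.choose r)
    (hYm : Y < m.choose r) (h₁ : m.choose r ≤ X + Y) (h₂ : X + Y < (m + 1).choose r)
    (hμ : X + Y ≤ μ) :
    shadow r (X + Y) < shadow r X + shadow r Y := by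
  have hrm : r < m := by
    rcases hm.eq_or_lt with rfl | h
    · rw [Nat.choose_self] at hXm
      omega
    · exact h
  have hdX := shadow_add_lift_sub hr hrm hXm.le
  have hdY := shadow_add_lift_sub hr hrm hYm.le
  have hdW := shadow_add_lift_sub (X := X + Y - m.choose r + 1) hr hrm (by omega)
  have hsup' := hsup (m - r) (m.choose r - X) (m.choose r - Y) (by omega) (by omega) (by omega)
    (by omega)
  rw [show m.choose r - X + (m.choose r - Y) - 1 = m.choose r - (X + Y - m.choose r + 1) by omega]
    at hsup'
  have hpred' := hpred r (X + Y - m.choose r + 1) hr (by omega) (by omega)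
  have hmono := shadow_mono (r - 1) (Nat.le_add_right (X + Y - m.choose r) 1)
  rw [shadow_eq hr hm h₁ h₂]
  omega

lemma shadowSubaddBelow_succ (hsub : ShadowSubaddBelow μ) (hpred : ShadowPredBelow μ)
    (hsup : LiftSuperaddBelow μ) : ShadowSubaddBelow (μ + 1) := by
  intro r X Y hr hX hY hμ
  rcases (show r = 1 ∨ 2 ≤ r by omega) with rfl | hr2
  · rw [shadow_one_left hX, shadow_one_left hY, shadow_one_left (by omega)]
    omega
  have hm : r ≤ top r (X + Y) := le_top (by omega)
  have h₁ := choose_top_le (N := X + Y) hr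
  have h₂ := lt_choose_top_succ (N := X + Y) hr
  by_cases hXm : (top r (X + Y)).choose r ≤ X
  · exact shadow_add_lt_of_choose_le hsub hpred hr2 hm hXm h₂ hY (by omega)
  by_cases hYm : (top r (X + Y)).choose r ≤ Y
  · rw [add_comm X, add_comm (shadow r X)]
    exact shadow_add_lt_of_choose_le hsub hpred hr2 hm hYm (by omega) hX (by omega)
  exact shadow_add_lt_of_lt_choose hpred hsup hr hm hX (by omega) (by omega) h₁ h₂ (by omega)

lemma shadowChooseBelow_succ (hsub : ShadowSubaddBelow (μ + 1)) (hch : ShadowChooseBelow μ) :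
    ShadowChooseBelow (μ + 1) := by
  intro r m hr hm hμ
  rcases (show r = 1 ∨ 2 ≤ r by omega) with rfl | hr2
  · simp
  rcases hm.eq_or_lt with rfl | hrm
  · rw [Nat.choose_self, shadow_one_right (by omega),
      Nat.choose_symm_of_eq_add (show r = r - 1 + 1 by omega), Nat.choose_one_right]
    omega
  obtain ⟨n, rfl⟩ : ∃ n, m = n + 1 := ⟨m - 1, by omega⟩
  have hpascal := Nat.choose_succ_left n r (by omega)
  have hpascal' := Nat.choose_succ_left n (r - 1) (by omega)
  have hpos := Nat.choose_pos (show r ≤ n by omega)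
  have hpos' := Nat.choose_pos (show r - 1 ≤ n by omega)
  have h := hsub (r - 1) (n.choose r) (n.choose (r - 1)) (by omega) hpos hpos' (by omega)
  rw [shadow_choose (by omega) (by omega)] at h
  have hn := hch r n hr (by omega) (by omega)
  rw [hpascal, add_comm]
  omega

lemma shadowPredBelow_of_shadowChooseBelow (hsub : ShadowSubaddBelow μ)
    (hch : ShadowChooseBelow μ) : ShadowPredBelow μ := by
  intro r N hr hN hμ
  rcases (show r = 1 ∨ 2 ≤ r by omega) with rfl | hr2
  · simp [shadow_one_left hN]
  have hm : r ≤ top r N := le_top hN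
  have h₁ := choose_top_le (N := N) hr
  have hch' := hch r (top r N) hr hm (by omega)
  rw [shadow_eq_top hr hN]
  rcases Nat.eq_zero_or_pos (N - (top r N).choose r) with h0 | hpos
  · have hN' := congrArg (shadow (r - 1)) (show N = (top r N).choose r by omega)
    rw [h0, shadow_zero_right]
    omega
  · have h := hsub (r - 1) ((top r N).choose r) (N - (top r N).choose r) (by omega)
      (Nat.choose_pos hm) hpos (by omega)
    rw [Nat.add_sub_cancel' h₁] at h
    omega

lemma liftChooseBelow_succ (hsup : LiftSuperaddBelow μ) (hch : LiftChooseBelow μ) :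
    LiftChooseBelow (μ + 1) := by
  intro j m hj hm hμ
  rcases hm.eq_or_lt with rfl | hjm
  · rw [Nat.choose_self, Nat.choose_succ_self_right, Nat.add_sub_cancel, lift_pred_self hj]
  obtain ⟨n, rfl⟩ : ∃ n, m = n + 1 := ⟨m - 1, by omega⟩
  have hpascal := Nat.choose_succ_left n j (by omega)
  have hpascal' := Nat.choose_succ_succ' n j
  have hpos := Nat.choose_pos (show j - 1 ≤ n by omega)
  have hpos' := Nat.choose_pos (show j ≤ n by omega)
  have h := hsup (j - 1) (n.choose (j - 1)) (n.choose j) (by omega) hpos hpos' (by omega)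
  rw [← hpascal] at h
  have hlift : lift (j - 1) (n.choose (j - 1)) = n.choose j := by
    simpa [Nat.sub_add_cancel (by omega : 1 ≤ j)] using lift_choose (j := j - 1) (m := n) (by omega)
      (by omega)
  have hn := hch j n hj (by omega) (by omega)
  have hmono := lift_mono (j - 1) (Nat.sub_le (n.choose j) 1)
  omega

lemma liftPredBelow_succ (hsup : LiftSuperaddBelow μ) (hch : LiftChooseBelow (μ + 1)) :
    LiftPredBelow (μ + 1) := by
  intro j N hj hN hμ
  have hm : j ≤ top j N := le_top hN
  have h₁ := choose_top_le (N := N) (show 1 ≤ j by omega)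
  rw [lift_eq_top (by omega) hN]
  rcases hm.eq_or_lt with heq | hjm
  · rw [← heq, Nat.choose_self, Nat.choose_succ_self, zero_add]
  have hC2 : 2 ≤ (top j N).choose j := by
    have := succ_sub_le_choose (show 1 ≤ j by omega) hm
    omega
  have h := hsup (j - 1) (N - (top j N).choose j + 1) ((top j N).choose j - 1) (by omega)
    (by omega) (by omega) (by omega)
  rw [show N - (top j N).choose j + 1 + ((top j N).choose j - 1) - 1 = N - 1 by omega] at h
  have hch' := hch j (top j N) hj hjm (by omega)
  have hmono := lift_mono (j - 1) (Nat.le_add_right (N - (top j N).choose j) 1)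
  omega

lemma lift_add_lift_le_of_lt_choose_succ (hsup : LiftSuperaddBelow μ)
    (hpred : LiftPredBelow (μ + 1)) {j m U V : ℕ} (hj : 2 ≤ j) (hm : j ≤ m)
    (hU : m.choose j ≤ U) (hUV : U + V - 1 < (m + 1).choose j) (hV : 1 ≤ V) (hμ : U + V - 1 ≤ μ) :
    lift j U + lift j V ≤ lift j (U + V - 1) := by
  have hpos := Nat.choose_pos (k := j) hm
  rw [lift_eq (by omega) hm hU (by omega), lift_eq (by omega) hm (by omega) hUV]
  have hV' := hpred j V hj hV (by omega)
  rcases Nat.eq_zero_or_pos (U - m.choose j) with h0 | hpos'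
  · rw [h0, show U + V - 1 - m.choose j = V - 1 by omega, lift_zero_right]
    omega
  · have h := hsup (j - 1) (U - m.choose j) V (by omega) hpos' hV (by omega)
    rw [show U - m.choose j + V - 1 = U + V - 1 - m.choose j by omega] at h
    have hmono := lift_mono (j - 1) (Nat.sub_le V 1)
    omega

lemma liftSuperaddBelow_succ (hsub : ShadowSubaddBelow (μ + 1))
    (hpred : LiftPredBelow (μ + 1)) (hsup : LiftSuperaddBelow μ) :
    LiftSuperaddBelow (μ + 1) := by
  suffices key : ∀ j U V, 1 ≤ j → 1 ≤ U → 1 ≤ V → V ≤ U → U + V - 1 < μ + 1 →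
      lift j U + lift j V ≤ lift j (U + V - 1) by
    intro j U V hj hU hV hμ
    rcases le_total V U with h | h
    · exact key j U V hj hU hV h hμ
    · rw [add_comm (lift j U), add_comm U]
      exact key j V U hj hV hU h (by omega)
  intro j U V hj hU hV hVU hμ
  rcases (show j = 1 ∨ 2 ≤ j by omega) with rfl | hj2
  · simpa only [lift_one_left] using choose_two_add_choose_two_le hU hV
  rcases hV.eq_or_lt with rfl | hV2
  · simp [lift_eq_zero_of_le (show 1 ≤ j by omega)]
  have hm : j ≤ top j U := le_top hU
  by_cases hsame : U + V - 1 < (top j U + 1).choose j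
  · exact lift_add_lift_le_of_lt_choose_succ hsup hpred hj2 hm (choose_top_le hj) hsame
      hV (by omega)
  have hU' := lt_choose_top_succ (N := U) hj
  set M := top j (U + V - 1)
  have hM₁ : M.choose j ≤ U + V - 1 := choose_top_le hj
  have hM₂ : U + V - 1 < (M + 1).choose j := lt_choose_top_succ hj
  have hmM : top j U < M := by
    by_contra! h
    have := Nat.choose_le_choose j (show M + 1 ≤ top j U + 1 by omega)
    omega
  have hUM : U < M.choose j := hU'.trans_le (Nat.choose_le_choose j hmM)
  have hMpos := Nat.choose_pos (show j ≤ M by omega)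
  have h := lift_add_lift_lt hsub (n := M) (U := U) (V := V) (W := U + V - M.choose j)
    (by omega) (by omega) hUM (by omega) (by omega) (by omega)
  have hpred' := hpred j (U + V - M.choose j) hj2 (by omega) (by omega)
  rw [lift_eq (by omega) (by omega) hM₁ hM₂,
    show U + V - 1 - M.choose j = U + V - M.choose j - 1 by omega]
  omega

theorem shadowSubaddBelow (μ : ℕ) : ShadowSubaddBelow μ := by
  suffices ∀ μ, ShadowSubaddBelow μ ∧ ShadowChooseBelow μ ∧ ShadowPredBelow μ ∧
      LiftChooseBelow μ ∧ LiftSuperaddBelow μ from (this μ).1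
  intro μ
  induction μ with
  | zero =>
    unfold ShadowSubaddBelow ShadowChooseBelow ShadowPredBelow LiftChooseBelow LiftSuperaddBelow
    refine ⟨?_, ?_, ?_, ?_, ?_⟩ <;> intros <;> omega
  | succ μ ih =>
    obtain ⟨hsub, hsch, hpred, hlch, hsup⟩ := ih
    have hsub' := shadowSubaddBelow_succ hsub hpred hsup
    have hsch' := shadowChooseBelow_succ hsub' hsch
    have hlch' := liftChooseBelow_succ hsup hlch
    exact ⟨hsub', hsch', shadowPredBelow_of_shadowChooseBelow hsub' hsch', hlch',
      liftSuperaddBelow_succ hsub' (liftPredBelow_succ hsup hlch') hsup⟩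

end Induction

def cascadeSum (a : ℕ → ℕ) (s k : ℕ) : ℕ := ∑ i ∈ Finset.range (s + 1), (a i).choose (k - i)

lemma cascadeSum_succ (a : ℕ → ℕ) (s k : ℕ) :
    cascadeSum a (s + 1) k = (a 0).choose k + cascadeSum (fun i => a (i + 1)) s (k - 1) := by
  rw [cascadeSum, Finset.sum_range_succ', add_comm, Nat.sub_zero]
  congr 1
  exact Finset.sum_congr rfl fun i _ => by rw [Nat.sub_sub, Nat.add_comm 1 i]

end Cascade

open Cascade

namespace Admissible

variable {k s : ℕ} {a : ℕ → ℕ}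

lemma tail (h : Admissible k (s + 1) a) : Admissible (k - 1) s (fun i => a (i + 1)) :=
  ⟨by have := h.1; omega, fun i hi => h.2.1 (i + 1) (by omega),
    (by have := h.2.2; omega : k - 1 - s ≤ a (s + 1))⟩

lemma le_head (h : Admissible k s a) : k ≤ a 0 := by
  induction s generalizing k a with
  | zero => simpa using h.2.2
  | succ s ih =>
    have h₁ := ih h.tail
    have h₂ := h.2.1 0 (by omega)
    have := h.1
    omega

lemma cascadeSum_lt (h : Admissible k s a) : cascadeSum a s k < (a 0 + 1).choose k := by
  induction s generalizing k a with
  | zero =>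
    simpa [cascadeSum] using choose_lt_choose_succ (by have := h.1; omega) h.le_head
  | succ s ih =>
    have h₁ : cascadeSum (fun i => a (i + 1)) s (k - 1) < (a 1 + 1).choose (k - 1) := ih h.tail
    have h₂ : (a 1 + 1).choose (k - 1) ≤ (a 0).choose (k - 1) :=
      Nat.choose_le_choose _ (h.2.1 0 (by omega))
    have h₃ := Nat.choose_succ_left (a 0) k (by have := h.1; omega)
    rw [cascadeSum_succ]
    omega

lemma lift_cascadeSum (h : Admissible k s a) :
    lift k (cascadeSum a s k) = cascadeSum a s (k + 1) := by
  induction s generalizing k a with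
  | zero => simpa [cascadeSum] using lift_choose (by have := h.1; omega) h.le_head
  | succ s ih =>
    have hk : 2 ≤ k := by have := h.1; omega
    have htail := h.tail
    have h₁ : cascadeSum (fun i => a (i + 1)) s (k - 1) < (a 1 + 1).choose (k - 1) :=
      htail.cascadeSum_lt
    have h₂ : (a 1 + 1).choose (k - 1) ≤ (a 0).choose (k - 1) :=
      Nat.choose_le_choose _ (h.2.1 0 (by omega))
    have h₃ := Nat.choose_succ_left (a 0) k (by omega)
    rw [cascadeSum_succ, cascadeSum_succ, Nat.add_sub_cancel,
      lift_eq (by omega) h.le_head (Nat.le_add_right _ _) (by omega), Nat.add_sub_cancel_left,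
      ih htail, Nat.sub_add_cancel (by omega : 1 ≤ k)]

end Admissible

lemma cSumZ_eq_cascadeSum (a : ℕ → ℕ) {s j : ℕ} (h : s ≤ j) : cSumZ a s j = cascadeSum a s j :=
  Finset.sum_congr rfl fun i hi => by
    have : i ≤ j := by have := Finset.mem_range.mp hi; omega
    rw [chooseZ, if_pos (by omega), show ((j : ℤ) - i).toNat = j - i by omega]

/-- Lemma (algorithm): for `k > 0` and sequences admissible for `k` with `c_k ≤ a_k`, if
`Σ C(c_{k-i}, k-i) + Σ C(a_{k-i}, k-i) = C(a_k+1, k) + Σ C(b_{k-i}, k-i)`, then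
`C(a_k+1, k+1) + Σ C(b_{k-i}, k+1-i) > Σ C(c_{k-i}, k+1-i) + Σ C(a_{k-i}, k+1-i)`. -/
theorem algorithm_lemma (k s t u : ℕ) (a b c : ℕ → ℕ) (hk : 0 < k)
    (ha : Admissible k s a) (hb : Admissible k t b) (hc : Admissible k u c)
    (hca : c 0 ≤ a 0)
    (heq : cSumZ c u (k : ℤ) + cSumZ a s (k : ℤ) = (a 0 + 1).choose k + cSumZ b t (k : ℤ)) :
    cSumZ c u ((k : ℤ) + 1) + cSumZ a s ((k : ℤ) + 1) <
      (a 0 + 1).choose (k + 1) + cSumZ b t ((k : ℤ) + 1) := by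
  have hs := ha.1
  have ht := hb.1
  have hu := hc.1
  rw [cSumZ_eq_cascadeSum c hu.le, cSumZ_eq_cascadeSum a hs.le, cSumZ_eq_cascadeSum b ht.le] at heq
  rw [← Nat.cast_succ, cSumZ_eq_cascadeSum c (by omega), cSumZ_eq_cascadeSum a (by omega),
    cSumZ_eq_cascadeSum b (by omega), ← ha.lift_cascadeSum, ← hb.lift_cascadeSum,
    ← hc.lift_cascadeSum]
  have hcn : cascadeSum c u k < (a 0 + 1).choose k :=
    hc.cascadeSum_lt.trans_le (Nat.choose_le_choose k (by omega))
  exact lift_add_lift_lt (shadowSubaddBelow _) hk (Nat.lt_succ_of_le ha.le_head) hcn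
    ha.cascadeSum_lt heq (Nat.lt_succ_self _)
end
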